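/- arXiv:2511.10612 — 11 statements merged into one kernel-verified Lean document; each statement's English description precedes it below -/
import Mathlib

section
/- Let S be a Clifford semigroup. For all x, y ∈ S, if x·x·y = x·y·x then x·y = y·x. -/
/-- A Clifford semigroup: a semigroup with a unary operation `⁻¹` such that
`(x⁻¹)⁻¹ = x`, `x * x⁻¹ * x = x`, `x⁻¹ * x = x * x⁻¹`, and all idempotents are central. -/
class CliffordSemigroup (S : Type*) extends Semigroup S, Inv S where
  inv_inv : ∀ x : S, x⁻¹⁻¹ = x
  mul_inv_mul : ∀ x : S, x * x⁻¹ * x = x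
  inv_mul_comm : ∀ x : S, x⁻¹ * x = x * x⁻¹
  idem_central : ∀ e : S, e * e = e → ∀ y : S, e * y = y * e

theorem clifford_comm_of_mul_mul {S : Type*} [CliffordSemigroup S] (x y : S)
    (h : x * x * y = x * y * x) : x * y = y * x := by
  have hx : x⁻¹ * x * x = x := by
    rw [CliffordSemigroup.inv_mul_comm, CliffordSemigroup.mul_inv_mul]
  have he : (x⁻¹ * x) * (x⁻¹ * x) = x⁻¹ * x := by
    rw [mul_assoc, ← mul_assoc x, CliffordSemigroup.mul_inv_mul]
  calc x * y = (x⁻¹ * x * x) * y := by rw [hx]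
    _ = x⁻¹ * (x * x * y) := by simp [mul_assoc]
    _ = x⁻¹ * (x * y * x) := by rw [h]
    _ = ((x⁻¹ * x) * y) * x := by simp [mul_assoc]
    _ = (y * (x⁻¹ * x)) * x := by rw [CliffordSemigroup.idem_central _ he y]
    _ = y * x := by rw [mul_assoc, hx]
end

section
/- Let S be a finite non-commutative Clifford semigroup. If the commuting graph of S contains at least one cycle, then the girth of the commuting graph of S equals 3. -/
/-- The commuting graph of a (non-commutative) semigroup: vertices are the
non-central elements, two distinct vertices are adjacent iff they commute. -/
def commGraph (S : Type*) [Mul S] : SimpleGraph {x : S // x ∉ Set.center S} where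
  Adj a b := a ≠ b ∧ (a : S) * b = (b : S) * a
  symm := ⟨fun a b h => ⟨h.1.symm, h.2.symm⟩⟩
  loopless := ⟨fun a h => h.1 rfl⟩

/-!
In a Clifford semigroup `a * a⁻¹` is a central idempotent and anything commuting with `a` also
commutes with `a⁻¹`. A cycle of the commuting graph contains a vertex `x` with two distinct
neighbours `a, b`. If `a` and `b` commute they form a triangle with `x`. Otherwise, if there were
no triangle, `x, a, a⁻¹` would force `a⁻¹ = a` (since `a⁻¹ = x` would make `b` commute with `a`),
so `a * a` and likewise `b * b` are central; but then `x, a * b, b * a` is a triangle.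
-/

namespace SimpleGraph

variable {V : Type*} {G : SimpleGraph V}

theorem egirth_eq_three_of_not_cliqueFree (h : ¬G.CliqueFree 3) : G.egirth = 3 :=
  le_antisymm
    (((not_cliqueFree_iff_top_isContained 3).1 h).egirth_le.trans (egirth_top (by simp)).le)
    three_le_egirth

theorem girth_eq_three_of_not_cliqueFree (h : ¬G.CliqueFree 3) : G.girth = 3 := by
  simp [girth, egirth_eq_three_of_not_cliqueFree h]

end SimpleGraph

theorem not_cliqueFree_commGraph {S : Type*} [Mul S] {p q r : S}
    (hp : p ∉ Set.center S) (hq : q ∉ Set.center S) (hr : r ∉ Set.center S)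
    (hpq : p ≠ q) (hpr : p ≠ r) (hqr : q ≠ r)
    (cpq : Commute p q) (cpr : Commute p r) (cqr : Commute q r) :
    ¬(commGraph S).CliqueFree 3 := by
  classical
  intro h
  refine h {⟨p, hp⟩, ⟨q, hq⟩, ⟨r, hr⟩} (SimpleGraph.is3Clique_triple_iff.2 ⟨?_, ?_, ?_⟩)
  exacts [⟨mt Subtype.mk.inj hpq, cpq⟩, ⟨mt Subtype.mk.inj hpr, cpr⟩,
    ⟨mt Subtype.mk.inj hqr, cqr⟩]

theorem commute_of_mem_center {M : Type*} [Semigroup M] {z : M} (hz : z ∈ Set.center M) (g : M) :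
    Commute g z :=
  Semigroup.mem_center_iff.1 hz g

namespace CliffordSemigroup

variable {S : Type*} [CliffordSemigroup S]

theorem mem_center_of_mul_self {e : S} (he : e * e = e) : e ∈ Set.center S :=
  Semigroup.mem_center_iff.2 fun g => (idem_central e he g).symm

theorem mul_inv_mem_center (a : S) : a * a⁻¹ ∈ Set.center S :=
  mem_center_of_mul_self (by rw [← mul_assoc, mul_inv_mul])

theorem inv_mul_inv (a : S) : a⁻¹ * a * a⁻¹ = a⁻¹ := by
  simpa only [inv_inv] using mul_inv_mul a⁻¹

theorem mul_mul_inv (a : S) : a * (a * a⁻¹) = a := by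
  rw [← inv_mul_comm, ← mul_assoc, mul_inv_mul]

theorem commute_inv_right {y a : S} (h : Commute y a) : Commute y a⁻¹ := by
  have he := commute_of_mem_center (mul_inv_mem_center a)
  refine Commute.symm ?_
  calc a⁻¹ * y = a⁻¹ * a * a⁻¹ * y := by rw [inv_mul_inv]
    _ = a⁻¹ * (y * (a * a⁻¹)) := by rw [(he y).eq]; simp only [mul_assoc]
    _ = a⁻¹ * (a * y) * a⁻¹ := by rw [← h.eq]; simp only [mul_assoc]
    _ = a * a⁻¹ * y * a⁻¹ := by rw [← inv_mul_comm]; simp only [mul_assoc]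
    _ = y * (a⁻¹ * a * a⁻¹) := by rw [← (he y).eq, inv_mul_comm]; simp only [mul_assoc]
    _ = y * a⁻¹ := by rw [inv_mul_inv]

theorem inv_mem_center {a : S} (ha : a ∈ Set.center S) : a⁻¹ ∈ Set.center S :=
  Semigroup.mem_center_iff.2 fun g => commute_inv_right (commute_of_mem_center ha g)

theorem commute_of_commute_mul_left {a b : S} (h : Commute (a * b) b) : Commute a b := by
  have he := commute_of_mem_center (mul_inv_mem_center b)
  calc a * b = a * b * (b * b⁻¹) := by rw [mul_assoc, mul_mul_inv]
    _ = b * (a * b) * b⁻¹ := by rw [← h.eq]; simp only [mul_assoc]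
    _ = b * (b * b⁻¹ * a) := by rw [← (he a).eq]; simp only [mul_assoc]
    _ = b * a := by rw [← mul_assoc, mul_mul_inv]

theorem mul_self_mem_center_of_cliqueFree (hT : (commGraph S).CliqueFree 3) {x a b : S}
    (hx : x ∉ Set.center S) (ha : a ∉ Set.center S)
    (hxa : Commute x a) (hxb : Commute x b) (hab : ¬Commute a b) : a * a ∈ Set.center S := by
  have hxa_ne : x ≠ a := by rintro rfl; exact hab hxb
  have hinv : a⁻¹ ∉ Set.center S := fun h => ha (inv_inv a ▸ inv_mem_center h)
  have hxinv_ne : x ≠ a⁻¹ := by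
    rintro rfl
    exact hab (inv_inv a ▸ commute_inv_right hxb.symm).symm
  by_cases hself : a⁻¹ = a
  · simpa only [hself] using mul_inv_mem_center a
  · exact absurd hT <| not_cliqueFree_commGraph hx ha hinv hxa_ne hxinv_ne (Ne.symm hself)
      hxa (commute_inv_right hxa) (inv_mul_comm a).symm

theorem not_cliqueFree_of_mul_self_mem_center {x a b : S} (hx : x ∉ Set.center S)
    (ha : a * a ∈ Set.center S) (hb : b * b ∈ Set.center S)
    (hxa : Commute x a) (hxb : Commute x b) (hab : ¬Commute a b) :
    ¬(commGraph S).CliqueFree 3 := by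
  have hab_nc : a * b ∉ Set.center S := fun h =>
    hab (commute_of_commute_mul_left (commute_of_mem_center h b).symm)
  have hba_nc : b * a ∉ Set.center S := fun h =>
    hab (commute_of_commute_mul_left (commute_of_mem_center h a).symm).symm
  have hx_ab : x ≠ a * b := by
    rintro rfl; exact hab (commute_of_commute_mul_left hxb)
  have hx_ba : x ≠ b * a := by
    rintro rfl; exact hab (commute_of_commute_mul_left hxa).symm
  have hcomm : Commute (a * b) (b * a) := by
    calc a * b * (b * a) = a * (a * (b * b)) := by
          rw [(commute_of_mem_center hb a).eq]; simp only [mul_assoc]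
      _ = b * b * (a * a) := by rw [← mul_assoc, (commute_of_mem_center ha _).eq]
      _ = b * a * (a * b) := by
          rw [mul_assoc, (commute_of_mem_center ha b).eq]; simp only [mul_assoc]
  exact not_cliqueFree_commGraph hx hab_nc hba_nc hx_ab hx_ba hab
    (hxa.mul_right hxb) (hxb.mul_right hxa) hcomm

theorem commGraph_not_cliqueFree {x a b : {y : S // y ∉ Set.center S}}
    (hxa : (commGraph S).Adj x a) (hxb : (commGraph S).Adj x b) (hab : a ≠ b) :
    ¬(commGraph S).CliqueFree 3 := by
  by_cases hadj : (commGraph S).Adj a b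
  · classical
    exact fun hT => hT {x, a, b} (SimpleGraph.is3Clique_triple_iff.2 ⟨hxa, hxb, hadj⟩)
  have hcomm : ¬Commute (a : S) b := fun h => hadj ⟨hab, h⟩
  intro hT
  exact not_cliqueFree_of_mul_self_mem_center x.2
    (mul_self_mem_center_of_cliqueFree hT x.2 a.2 hxa.2 hxb.2 hcomm)
    (mul_self_mem_center_of_cliqueFree hT x.2 b.2 hxb.2 hxa.2 (fun h => hcomm h.symm))
    hxa.2 hxb.2 hcomm hT

end CliffordSemigroup

theorem clifford_girth_eq_three_general {S : Type*} [CliffordSemigroup S]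
    (hcyc : ¬ (commGraph S).IsAcyclic) :
    (commGraph S).girth = 3 := by
  obtain ⟨v, c, hc⟩ : ∃ v, ∃ c : (commGraph S).Walk v v, c.IsCycle := by
    simpa [SimpleGraph.IsAcyclic] using hcyc
  exact SimpleGraph.girth_eq_three_of_not_cliqueFree <|
    CliffordSemigroup.commGraph_not_cliqueFree (c.adj_snd hc.not_nil)
      (c.adj_penultimate hc.not_nil).symm hc.snd_ne_penultimate

theorem clifford_girth_eq_three {S : Type*} [CliffordSemigroup S] [Fintype S]
    (hnc : ∃ a b : S, a * b ≠ b * a)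
    (hcyc : ¬ (commGraph S).IsAcyclic) :
    (commGraph S).girth = 3 :=
  clifford_girth_eq_three_general hcyc
end

section
/- Let X = {1,2,3} and consider the full transformation monoid on X. The four transformations α₁ (constant map to 1), α₂ (constant map to 2), β₁ (1↦1, 2↦2, 3↦1), β₂ (1↦1, 2↦2, 3↦2) form a subsemigroup S of idempotents, S is non-commutative, and the commuting graph of S is the 4-cycle α₁ — β₁ — α₂ — β₂ — α₁; in particular the girth of the commuting graph of S is 4. -/
/-- `α₁`: the constant map to `1` (written `0` in `Fin 3`). -/
def α₁ : Function.End (Fin 3) := fun _ => 0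
/-- `α₂`: the constant map to `2` (written `1` in `Fin 3`). -/
def α₂ : Function.End (Fin 3) := fun _ => 1
/-- `β₁`: `1 ↦ 1, 2 ↦ 2, 3 ↦ 1`. -/
def β₁ : Function.End (Fin 3) := ![0, 1, 0]
/-- `β₂`: `1 ↦ 1, 2 ↦ 2, 3 ↦ 2`. -/
def β₂ : Function.End (Fin 3) := ![0, 1, 1]

/-- The set `{α₁, α₂, β₁, β₂}` of transformations of `{1,2,3}`. -/
def T6 : Set (Function.End (Fin 3)) := {α₁, α₂, β₁, β₂}

/-- The subsemigroup of the full transformation monoid generated by `{α₁, α₂, β₁, β₂}`. -/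
def S6 : Subsemigroup (Function.End (Fin 3)) := Subsemigroup.closure T6

namespace SimpleGraph

variable {V : Type*} {G : SimpleGraph V}

theorem four_le_egirth_of_coloring (c : G.Coloring Bool) : 4 ≤ G.egirth := by
  refine le_egirth.mpr fun a w hw => ?_
  have h_even : Even w.length := (c.even_length_iff_congr w).mpr Iff.rfl
  have h_three : 3 ≤ w.length := hw.three_le_length
  have h_four : 4 ≤ w.length := by
    obtain ⟨k, hk⟩ := h_even
    omega
  exact_mod_cast h_four

theorem egirth_le_four_of_adj {a b c d : V} (hab : G.Adj a b) (hbc : G.Adj b c)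
    (hcd : G.Adj c d) (hda : G.Adj d a) (hac : a ≠ c) (hbd : b ≠ d) : G.egirth ≤ 4 := by
  let w : G.Walk a a := .cons hab (.cons hbc (.cons hcd (.cons hda .nil)))
  have hw : w.IsCycle := by
    simp [w, Walk.isCycle_def, hab.ne, hbc.ne, hcd.ne, hda.ne, hac, hbd, hab.ne.symm,
      hda.ne.symm, hac.symm]
  exact egirth_le_length hw

theorem girth_eq_four_of_coloring {a b c d : V} (col : G.Coloring Bool) (hab : G.Adj a b)
    (hbc : G.Adj b c) (hcd : G.Adj c d) (hda : G.Adj d a) (hac : a ≠ c) (hbd : b ≠ d) :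
    G.girth = 4 := by
  rw [girth, le_antisymm (egirth_le_four_of_adj hab hbc hcd hda hac hbd)
    (four_le_egirth_of_coloring col)]
  rfl

end SimpleGraph

theorem Subsemigroup.coe_closure_of_mul_mem {M : Type*} [Mul M] {s : Set M}
    (hs : ∀ a ∈ s, ∀ b ∈ s, a * b ∈ s) : (closure s : Set M) = s :=
  congrArg SetLike.coe (closure_eq ⟨s, fun {a b} ha hb => hs a ha b hb⟩)

instance {α : Type*} [Fintype α] [DecidableEq α] : DecidableEq (Function.End α) :=
  inferInstanceAs (DecidableEq (α → α))

theorem mem_T6 {f : Function.End (Fin 3)} : f ∈ T6 ↔ f = α₁ ∨ f = α₂ ∨ f = β₁ ∨ f = β₂ := by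
  simp only [T6, Set.mem_insert_iff, Set.mem_singleton_iff]

theorem forall_mem_T6 {p : Function.End (Fin 3) → Prop} :
    (∀ f ∈ T6, p f) ↔ p α₁ ∧ p α₂ ∧ p β₁ ∧ p β₂ := by
  simp only [mem_T6, forall_eq_or_imp, forall_eq]

theorem exists_mem_T6 {p : Function.End (Fin 3) → Prop} :
    (∃ f ∈ T6, p f) ↔ p α₁ ∨ p α₂ ∨ p β₁ ∨ p β₂ := by
  simp only [mem_T6, exists_eq_or_imp, exists_eq_left]

theorem mul_mem_T6 : ∀ f ∈ T6, ∀ g ∈ T6, f * g ∈ T6 := by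
  simp only [forall_mem_T6]
  simp only [mem_T6]
  and_intros <;> decide

theorem coe_S6 : (S6 : Set (Function.End (Fin 3))) = T6 :=
  Subsemigroup.coe_closure_of_mul_mem mul_mem_T6

theorem mem_S6 {f : Function.End (Fin 3)} : f ∈ S6 ↔ f ∈ T6 := by
  rw [← SetLike.mem_coe, coe_S6]

theorem mul_self_of_mem_T6 : ∀ f ∈ T6, f * f = f := by
  simp only [forall_mem_T6]
  and_intros <;> decide

theorem exists_mul_ne_mul_of_mem_T6 : ∀ f ∈ T6, ∃ g ∈ T6, g * f ≠ f * g := by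
  simp only [forall_mem_T6, exists_mem_T6]
  and_intros <;> decide

theorem commute_iff_of_mem_T6 : ∀ f ∈ T6, ∀ g ∈ T6, (f ≠ g ∧ f * g = g * f) ↔
    ((f, g) ∈ ({(α₁, β₁), (β₁, α₁), (β₁, α₂), (α₂, β₁), (α₂, β₂), (β₂, α₂),
      (β₂, α₁), (α₁, β₂)} : Set (Function.End (Fin 3) × Function.End (Fin 3)))) := by
  simp only [forall_mem_T6, Set.mem_insert_iff, Set.mem_singleton_iff, Prod.mk.injEq]
  and_intros <;> decide

/-- On `T6`, `f 0 = f 1` holds exactly for the constant maps `α₁`, `α₂`. -/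
theorem not_commute_of_mem_T6_of_eq_iff : ∀ f ∈ T6, ∀ g ∈ T6, f ≠ g →
    (f 0 = f 1 ↔ g 0 = g 1) → f * g ≠ g * f := by
  simp only [forall_mem_T6]
  and_intros <;> decide

theorem not_mem_center_S6 (x : S6) : x ∉ Set.center S6 := by
  obtain ⟨g, hg, hgx⟩ := exists_mul_ne_mul_of_mem_T6 x (mem_S6.mp x.2)
  rw [Semigroup.mem_center_iff]
  exact fun hx => hgx (congrArg Subtype.val (hx ⟨g, mem_S6.mpr hg⟩))

def vertexOfMemT6 (f : Function.End (Fin 3)) (hf : f ∈ T6) : {x : S6 // x ∉ Set.center S6} :=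
  ⟨⟨f, mem_S6.mpr hf⟩, not_mem_center_S6 _⟩

theorem vertexOfMemT6_ne {f g : Function.End (Fin 3)} {hf : f ∈ T6} {hg : g ∈ T6} (h : f ≠ g) :
    vertexOfMemT6 f hf ≠ vertexOfMemT6 g hg :=
  fun e => h (congrArg (fun v => v.1.1) e)

theorem commGraph_adj_vertexOfMemT6 {f g : Function.End (Fin 3)} {hf : f ∈ T6} {hg : g ∈ T6}
    (h : f ≠ g ∧ f * g = g * f) : (commGraph S6).Adj (vertexOfMemT6 f hf) (vertexOfMemT6 g hg) :=
  ⟨vertexOfMemT6_ne h.1, Subtype.ext h.2⟩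

def commGraphS6Coloring : (commGraph S6).Coloring Bool :=
  SimpleGraph.Coloring.mk (fun v => decide (v.1.1 0 = v.1.1 1)) fun {u v} huv hcol =>
    not_commute_of_mem_T6_of_eq_iff u.1.1 (mem_S6.mp u.1.2) v.1.1 (mem_S6.mp v.1.2)
      (fun h => huv.1 (Subtype.ext (Subtype.ext h))) (decide_eq_decide.mp hcol)
      (congrArg Subtype.val huv.2)

theorem commGraph_of_S6_is_four_cycle :
    -- `{α₁, α₂, β₁, β₂}` is a subsemigroup (of idempotents) of the full transformation monoid
    ((S6 : Set (Function.End (Fin 3))) = T6) ∧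
    (∀ f ∈ T6, f * f = f) ∧
    -- it is non-commutative
    (α₁ * α₂ ≠ α₂ * α₁) ∧
    -- every element of `S6` is non-central in `S6`, so all four elements are vertices
    (∀ x : S6, x ∉ Set.center S6) ∧
    -- the commuting graph is exactly the 4-cycle α₁ — β₁ — α₂ — β₂ — α₁
    (∀ x ∈ T6, ∀ y ∈ T6, (x ≠ y ∧ x * y = y * x) ↔
      ((x, y) ∈ ({(α₁, β₁), (β₁, α₁), (β₁, α₂), (α₂, β₁), (α₂, β₂), (β₂, α₂),
        (β₂, α₁), (α₁, β₂)} : Set (Function.End (Fin 3) × Function.End (Fin 3))))) ∧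
    -- in particular its girth is 4
    (commGraph S6).girth = 4 := by
  refine ⟨coe_S6, mul_self_of_mem_T6, by decide, not_mem_center_S6, commute_iff_of_mem_T6, ?_⟩
  have hα₁ : α₁ ∈ T6 := by simp [T6]
  have hα₂ : α₂ ∈ T6 := by simp [T6]
  have hβ₁ : β₁ ∈ T6 := by simp [T6]
  have hβ₂ : β₂ ∈ T6 := by simp [T6]
  exact SimpleGraph.girth_eq_four_of_coloring commGraphS6Coloring
    (commGraph_adj_vertexOfMemT6 (hf := hα₁) (hg := hβ₁) (by decide))
    (commGraph_adj_vertexOfMemT6 (hf := hβ₁) (hg := hα₂) (by decide))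
    (commGraph_adj_vertexOfMemT6 (hf := hα₂) (hg := hβ₂) (by decide))
    (commGraph_adj_vertexOfMemT6 (hf := hβ₂) (hg := hα₁) (by decide))
    (vertexOfMemT6_ne (by decide)) (vertexOfMemT6_ne (by decide))
end

section
/- For every n ∈ ℕ with n ≥ 2, there exists a finite non-commutative completely regular semigroup S such that the girth of the commuting graph of S equals 2n. -/
namespace SimpleGraph

variable {V : Type*} {G : SimpleGraph V}

lemma cycleGraph_adj_iff_eq_add_one {m : ℕ} [NeZero m] (hm : 2 ≤ m) {u v : Fin m} :
    (cycleGraph m).Adj u v ↔ u = v + 1 ∨ v = u + 1 := by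
  obtain ⟨m, rfl⟩ : ∃ k, m = k + 2 := ⟨m - 2, by omega⟩
  rw [cycleGraph_adj, sub_eq_iff_eq_add, sub_eq_iff_eq_add, add_comm 1 v, add_comm 1 u]

lemma Walk.IsCycle.exists_adj_ne_of_mem_support {u v : V} {p : G.Walk u u} (hp : p.IsCycle)
    (hv : v ∈ p.support) :
    ∃ a ∈ p.support, ∃ b ∈ p.support, a ≠ b ∧ G.Adj v a ∧ G.Adj v b := by
  obtain ⟨a, b, hab, hset⟩ := Set.ncard_eq_two.mp (hp.ncard_neighborSet_toSubgraph_eq_two hv)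
  have ha : p.toSubgraph.Adj v a := show a ∈ p.toSubgraph.neighborSet v by simp [hset]
  have hb : p.toSubgraph.Adj v b := show b ∈ p.toSubgraph.neighborSet v by simp [hset]
  exact ⟨a, mem_support_of_adj_toSubgraph ha.symm, b, mem_support_of_adj_toSubgraph hb.symm,
    hab, ha.adj_sub, hb.adj_sub⟩

lemma Walk.IsCycle.card_le_length_of_subset_support {u : V} {p : G.Walk u u} (hp : p.IsCycle)
    (s : Finset V) (hs : ∀ v ∈ s, v ∈ p.support) : s.card ≤ p.length := by
  classical
  have hsub : s ⊆ p.support.tail.toFinset := fun v hv => by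
    rcases p.mem_support_iff.mp (hs v hv) with rfl | h
    · exact List.mem_toFinset.mpr (end_mem_tail_support hp.not_nil)
    · exact List.mem_toFinset.mpr h
  calc s.card ≤ p.support.tail.toFinset.card := Finset.card_le_card hsub
    _ = p.length := by
      rw [List.toFinset_card_of_nodup hp.support_nodup, List.length_tail, length_support,
        Nat.add_sub_cancel]

open Fin.NatCast in
/-- A vertex of a cycle has two distinct neighbours on it, so the cycle avoids the pendant
vertices, and its vertices in `cycleGraph m` are closed under `k ↦ k + 1`. -/
lemma Walk.IsCycle.le_length_of_cycleGraph_embedding {m : ℕ} (hm : 3 ≤ m)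
    (f : cycleGraph m ↪g G) (hpendant : ∀ v ∉ Set.range f, (G.neighborSet v).Subsingleton)
    {u : V} {p : G.Walk u u} (hp : p.IsCycle) : m ≤ p.length := by
  have : NeZero m := ⟨by omega⟩
  have hrange : ∀ v ∈ p.support, v ∈ Set.range f := fun v hv => by
    by_contra hvf
    obtain ⟨a, -, b, -, hab, ha, hb⟩ := hp.exists_adj_ne_of_mem_support hv
    exact hab (hpendant v hvf ha hb)
  have hsucc : ∀ k, f k ∈ p.support → f (k + 1) ∈ p.support := fun k hk => by
    obtain ⟨a, ha, b, hb, hab, hka, hkb⟩ := hp.exists_adj_ne_of_mem_support hk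
    obtain ⟨i, rfl⟩ := hrange a ha
    obtain ⟨j, rfl⟩ := hrange b hb
    rcases (cycleGraph_adj_iff_eq_add_one (by omega)).mp (f.map_adj_iff.mp hka) with hi | rfl
    · rcases (cycleGraph_adj_iff_eq_add_one (by omega)).mp (f.map_adj_iff.mp hkb) with hj | rfl
      · exact absurd (congrArg f (add_right_cancel (hi.symm.trans hj))) hab
      · exact hb
    · exact ha
  obtain ⟨k₀, hk₀⟩ := hrange u p.start_mem_support
  have hall : ∀ t : ℕ, f (k₀ + t) ∈ p.support := fun t => by
    induction t with
    | zero => simp [hk₀]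
    | succ t ih => simpa [add_assoc] using hsucc _ ih
  simpa using hp.card_le_length_of_subset_support (Finset.univ.map f.toEmbedding) fun v hv => by
    obtain ⟨k, -, rfl⟩ := Finset.mem_map.mp hv
    simpa using hall (k - k₀).val

theorem egirth_eq_of_cycleGraph_embedding {m : ℕ} (hm : 3 ≤ m) (f : cycleGraph m ↪g G)
    (hpendant : ∀ v ∉ Set.range f, (G.neighborSet v).Subsingleton) : G.egirth = m := by
  refine le_antisymm ?_ (le_egirth.mpr fun _ p hp => ?_)
  · obtain ⟨v, p, hp, hlen⟩ := (cycleGraph_isContained_iff (by omega)).mp f.isContained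
    exact hlen ▸ egirth_le_length hp
  · exact_mod_cast hp.le_length_of_cycleGraph_embedding hm f hpendant

end SimpleGraph

inductive CycleBand (n : ℕ)
  | band (i : ZMod n)
  | ideal (v c : ZMod n)

namespace CycleBand

variable {n : ℕ}

instance : Mul (CycleBand n) where
  mul
    | band i, band _ => band i
    | band i, ideal _ c => ideal (if i = c + 1 then c else i) c
    | ideal v c, _ => ideal v c

@[simp] lemma band_mul_band (i j : ZMod n) : band i * band j = band i := rfl

@[simp] lemma band_mul_ideal (i v c : ZMod n) :
    band i * ideal v c = ideal (if i = c + 1 then c else i) c := rfl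

@[simp] lemma ideal_mul (v c : ZMod n) (x : CycleBand n) : ideal v c * x = ideal v c := rfl

instance : Semigroup (CycleBand n) where
  mul_assoc := by rintro (_ | _) (_ | _) (_ | _) <;> rfl

def equivSum : CycleBand n ≃ ZMod n ⊕ ZMod n × ZMod n where
  toFun
    | band i => .inl i
    | ideal v c => .inr (v, c)
  invFun
    | .inl i => band i
    | .inr (v, c) => ideal v c
  left_inv := by rintro (_ | _) <;> rfl
  right_inv := by rintro (_ | _) <;> rfl

instance [NeZero n] : Fintype (CycleBand n) := Fintype.ofEquiv _ equivSum.symm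

lemma mul_self (x : CycleBand n) : x * x = x := by
  rcases x with _ | _ <;> rfl

lemma notMem_center [Fact (1 < n)] (x : CycleBand n) : x ∉ Set.center (CycleBand n) := by
  rw [Semigroup.mem_center_iff]
  push Not
  rcases x with i | ⟨v, c⟩
  · exact ⟨band (i + 1), by simp⟩
  · exact ⟨ideal (v + 1) c, by simp⟩

def IsOnCycle : CycleBand n → Prop
  | band _ => True
  | ideal v c => v = c

def cycleSucc : CycleBand n → CycleBand n
  | band i => ideal i i
  | ideal _ c => band (c + 1)

lemma isOnCycle_cycleSucc (x : CycleBand n) : IsOnCycle (cycleSucc x) := by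
  rcases x with _ | _ <;> trivial

lemma commute_iff_of_isOnCycle {x y : CycleBand n} (hx : IsOnCycle x) (hy : IsOnCycle y) :
    x ≠ y ∧ x * y = y * x ↔ y = cycleSucc x ∨ x = cycleSucc y := by
  rcases x with i | ⟨v, c⟩ <;> rcases y with j | ⟨w, d⟩
  · simp [cycleSucc]
  · obtain rfl : w = d := hy
    simp only [cycleSucc, band_mul_ideal, ideal_mul]
    split_ifs with h <;> simp [h, eq_comm]
  · obtain rfl : v = c := hx
    simp only [cycleSucc, band_mul_ideal, ideal_mul]
    split_ifs with h <;> simp [h, eq_comm]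
  · simp [cycleSucc]

lemma eq_band_of_commute {v c : ZMod n} (hvc : v ≠ c) {y : CycleBand n} (hne : ideal v c ≠ y)
    (h : ideal v c * y = y * ideal v c) : y = band v := by
  rcases y with i | _
  · simp only [ideal_mul, band_mul_ideal, ideal.injEq, and_true] at h
    split_ifs at h
    · exact absurd h hvc
    · rw [h]
  · exact absurd h hne

lemma neighborSet_commGraph_subsingleton {x : {x : CycleBand n // x ∉ Set.center _}}
    (hx : ¬IsOnCycle x.val) : ((commGraph (CycleBand n)).neighborSet x).Subsingleton := by
  obtain ⟨_ | ⟨v, c⟩, _⟩ := x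
  · exact absurd trivial hx
  intro y hy z hz
  exact Subtype.ext ((eq_band_of_commute hx (Subtype.coe_ne_coe.mpr hy.1) hy.2).trans
    (eq_band_of_commute hx (Subtype.coe_ne_coe.mpr hz.1) hz.2).symm)

lemma cycleSucc_iterate_two_mul (a : ℕ) :
    cycleSucc^[2 * a] (band 0) = (band a : CycleBand n) := by
  induction a with
  | zero => simp
  | succ a ih =>
    rw [Nat.mul_succ, add_comm, Function.iterate_add_apply, ih]
    simp [cycleSucc]

def cyclePoint (k : Fin (2 * n)) : CycleBand n := cycleSucc^[k.val] (band 0)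

def cyclePosition : CycleBand n → ℕ
  | band i => 2 * i.val
  | ideal _ c => 2 * c.val + 1

lemma cyclePosition_cyclePoint [NeZero n] (k : Fin (2 * n)) :
    cyclePosition (cyclePoint k) = k.val := by
  obtain ⟨a, ha | ha⟩ := Nat.even_or_odd' k.val <;>
  · have hlt : a < n := by omega
    simp [cyclePoint, ha, Function.iterate_succ_apply', cycleSucc_iterate_two_mul, cycleSucc,
      cyclePosition, ZMod.val_cast_of_lt hlt]

lemma cyclePoint_injective [NeZero n] : Function.Injective (cyclePoint (n := n)) :=
  fun k l h => Fin.ext (by rw [← cyclePosition_cyclePoint k, h, cyclePosition_cyclePoint])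

lemma isOnCycle_cyclePoint (k : Fin (2 * n)) : IsOnCycle (cyclePoint k) := by
  rcases h : k.val with _ | j
  · simp [cyclePoint, h, IsOnCycle]
  · rw [cyclePoint, h, Function.iterate_succ_apply']
    exact isOnCycle_cycleSucc _

lemma exists_cyclePoint_eq [NeZero n] {x : CycleBand n} (hx : IsOnCycle x) :
    ∃ k, cyclePoint k = x := by
  rcases x with i | ⟨v, c⟩
  · refine ⟨⟨2 * i.val, by have := i.val_lt; omega⟩, ?_⟩
    simp [cyclePoint, cycleSucc_iterate_two_mul]
  · obtain rfl : v = c := hx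
    refine ⟨⟨2 * v.val + 1, by have := v.val_lt; omega⟩, ?_⟩
    simp [cyclePoint, Function.iterate_succ_apply', cycleSucc_iterate_two_mul, cycleSucc]

lemma cyclePoint_add_one [NeZero n] (k : Fin (2 * n)) :
    cyclePoint (k + 1) = cycleSucc (cyclePoint k) := by
  have hper : Function.IsPeriodicPt cycleSucc (2 * n) (band 0 : CycleBand n) := by
    simp [Function.IsPeriodicPt, Function.IsFixedPt, cycleSucc_iterate_two_mul]
  rw [cyclePoint, cyclePoint, Fin.val_add, Fin.val_one', Nat.add_mod_mod,
    hper.iterate_mod_apply, Function.iterate_succ_apply']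

def cycleEmbedding [Fact (1 < n)] :
    SimpleGraph.cycleGraph (2 * n) ↪g commGraph (CycleBand n) where
  toFun k := ⟨cyclePoint k, notMem_center _⟩
  inj' _ _ h := cyclePoint_injective (congrArg Subtype.val h)
  map_rel_iff' {k l} := by
    have : 2 ≤ 2 * n := by have := Fact.out (p := 1 < n); omega
    change (⟨cyclePoint k, _⟩ : {x // x ∉ _}) ≠ ⟨cyclePoint l, _⟩ ∧
      cyclePoint k * cyclePoint l = cyclePoint l * cyclePoint k ↔ _
    rw [ne_eq, Subtype.mk.injEq, ← ne_eq,
      commute_iff_of_isOnCycle (isOnCycle_cyclePoint k) (isOnCycle_cyclePoint l),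
      ← cyclePoint_add_one, ← cyclePoint_add_one, cyclePoint_injective.eq_iff,
      cyclePoint_injective.eq_iff, SimpleGraph.cycleGraph_adj_iff_eq_add_one this, or_comm]

lemma girth_commGraph [Fact (1 < n)] : (commGraph (CycleBand n)).girth = 2 * n := by
  have := Fact.out (p := 1 < n)
  have hpendant : ∀ x ∉ Set.range cycleEmbedding,
      ((commGraph (CycleBand n)).neighborSet x).Subsingleton := fun x hx =>
    neighborSet_commGraph_subsingleton fun hcyc =>
      hx ((exists_cyclePoint_eq hcyc).imp fun _ hk => Subtype.ext hk)
  rw [SimpleGraph.girth, SimpleGraph.egirth_eq_of_cycleGraph_embedding (by omega) cycleEmbedding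
    hpendant, ENat.toNat_natCast]

end CycleBand

theorem exists_completely_regular_semigroup_girth_eq_two_mul (n : ℕ) (hn : 2 ≤ n) :
    ∃ (S : Type) (_ : Semigroup S) (_ : Fintype S) (inv : S → S),
      -- `S` is completely regular, witnessed by the unary operation `inv`
      (∀ x : S, inv (inv x) = x) ∧
      (∀ x : S, x * inv x * x = x) ∧
      (∀ x : S, inv x * x = x * inv x) ∧
      -- `S` is non-commutative
      (∃ a b : S, a * b ≠ b * a) ∧
      -- and the girth of its commuting graph is `2 * n`
      (commGraph S).girth = 2 * n := by
  have : Fact (1 < n) := ⟨hn⟩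
  obtain ⟨a, hab⟩ := not_forall.mp <|
    Semigroup.mem_center_iff.not.mp (CycleBand.notMem_center (.band (0 : ZMod n)))
  refine ⟨CycleBand n, inferInstance, inferInstance, id, fun _ => rfl, fun x => ?_, fun _ => rfl,
    ⟨a, .band 0, hab⟩, CycleBand.girth_commGraph⟩
  simp only [id, CycleBand.mul_self]
end

section
/- For every n ∈ ℕ, the clique number of the commuting graph of the group S₃ × Cₙ (direct product of the symmetric group on 3 letters with the cyclic group of order n) equals 2n. -/
open Finset

section Product

variable {G A : Type*} [Mul G] [CommSemigroup A]

lemma mem_center_prod_iff {x : G × A} : x ∈ Set.center (G × A) ↔ x.1 ∈ Set.center G := by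
  simp [Set.center_prod, Set.center_eq_univ]

def commGraphProdEquiv :
    {x : G × A // x ∉ Set.center (G × A)} ≃ {g : G // g ∉ Set.center G} × A :=
  (Equiv.subtypeEquivRight fun _ => mem_center_prod_iff.not).trans
    (@Equiv.prodSubtypeFstEquivSubtypeProd G A (· ∉ Set.center G))

lemma commGraph_prod_adj_iff {x y : {x : G × A // x ∉ Set.center (G × A)}} :
    (commGraph (G × A)).Adj x y ↔
      x ≠ y ∧ (x : G × A).1 * (y : G × A).1 = (y : G × A).1 * (x : G × A).1 := by
  simp only [commGraph, Prod.ext_iff, Prod.fst_mul, Prod.snd_mul, mul_comm (x : G × A).2,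
    and_true]

variable [Finite G] [Finite A]

lemma cliqueNum_commGraph_prod_le :
    (commGraph (G × A)).cliqueNum ≤ (commGraph G).cliqueNum * Nat.card A := by
  classical
  have := Fintype.ofFinite A
  obtain ⟨s, hs⟩ := (commGraph (G × A)).exists_isNClique_cliqueNum
  set e := commGraphProdEquiv (G := G) (A := A)
  set t := s.image fun x => (e x).1
  have ht : (commGraph G).IsClique (t : Set _) := by
    simp only [t, coe_image]
    rintro _ ⟨x, hx, rfl⟩ _ ⟨y, hy, rfl⟩ hxy
    have hne : x ≠ y := by rintro rfl; exact hxy rfl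
    exact ⟨hxy, (commGraph_prod_adj_iff.mp (hs.isClique hx hy hne)).2⟩
  have hst : s.map e.toEmbedding ⊆ t ×ˢ univ := fun p hp => by
    obtain ⟨x, hx, rfl⟩ := mem_map.mp hp
    exact mem_product.mpr ⟨mem_image_of_mem _ hx, mem_univ _⟩
  calc (commGraph (G × A)).cliqueNum = #(s.map e.toEmbedding) := by rw [card_map, hs.card_eq]
    _ ≤ #t * Nat.card A := by
        simpa [Nat.card_eq_fintype_card] using card_le_card hst
    _ ≤ (commGraph G).cliqueNum * Nat.card A := Nat.mul_le_mul_right _ ht.card_le_cliqueNum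

lemma le_cliqueNum_commGraph_prod :
    (commGraph G).cliqueNum * Nat.card A ≤ (commGraph (G × A)).cliqueNum := by
  classical
  have := Fintype.ofFinite A
  obtain ⟨t, ht⟩ := (commGraph G).exists_isNClique_cliqueNum
  set e := commGraphProdEquiv (G := G) (A := A)
  set s := (t ×ˢ univ).map e.symm.toEmbedding
  have hs : (commGraph (G × A)).IsClique (s : Set _) := by
    intro x hx y hy hxy
    simp only [s, coe_map, Set.mem_image, mem_coe, mem_product] at hx hy
    obtain ⟨⟨g, a⟩, ⟨hg, -⟩, rfl⟩ := hx
    obtain ⟨⟨h, b⟩, ⟨hh, -⟩, rfl⟩ := hy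
    refine commGraph_prod_adj_iff.mpr ⟨hxy, ?_⟩
    rcases eq_or_ne g h with rfl | hgh
    · rfl
    · exact (ht.isClique hg hh hgh).2
  calc (commGraph G).cliqueNum * Nat.card A = #s := by
        simp [s, ht.card_eq, Nat.card_eq_fintype_card]
    _ ≤ (commGraph (G × A)).cliqueNum := hs.card_le_cliqueNum

lemma cliqueNum_commGraph_prod :
    (commGraph (G × A)).cliqueNum = (commGraph G).cliqueNum * Nat.card A :=
  cliqueNum_commGraph_prod_le.antisymm le_cliqueNum_commGraph_prod

end Product

lemma cliqueNum_commGraph_le_of_card_commuting_le {S : Type*} [Mul S] [Fintype S] [DecidableEq S]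
    [DecidablePred (· ∈ Set.center S)] {k : ℕ}
    (hk : ∀ x ∉ Set.center S, #{y | y ∉ Set.center S ∧ x * y = y * x} ≤ k) :
    (commGraph S).cliqueNum ≤ k := by
  obtain ⟨s, hs⟩ := (commGraph S).exists_isNClique_cliqueNum
  rw [← hs.card_eq]
  obtain rfl | ⟨x, hx⟩ := s.eq_empty_or_nonempty
  · exact Nat.zero_le k
  have hsub : s.map (Function.Embedding.subtype _) ⊆
      ({y | y ∉ Set.center S ∧ x * y = y * x} : Finset S) := by
    intro _ hmem
    obtain ⟨y, hy, rfl⟩ := mem_map.mp hmem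
    refine mem_filter.mpr ⟨mem_univ _, y.2, ?_⟩
    rcases eq_or_ne x y with rfl | hxy
    · rfl
    · exact (hs.isClique hx hy hxy).2
  exact (card_map _ ▸ card_le_card hsub).trans (hk x x.2)

open Equiv in
lemma cliqueNum_commGraph_perm_fin_three : (commGraph (Perm (Fin 3))).cliqueNum = 2 := by
  refine le_antisymm (cliqueNum_commGraph_le_of_card_commuting_le (by decide)) ?_
  set c : {σ : Perm (Fin 3) // σ ∉ Set.center _} := ⟨finRotate 3, by decide⟩
  set c' : {σ : Perm (Fin 3) // σ ∉ Set.center _} := ⟨(finRotate 3)⁻¹, by decide⟩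
  have hne : c ≠ c' := by simp only [c, c', ne_eq, Subtype.mk.injEq]; decide
  have hclique : (commGraph (Perm (Fin 3))).IsClique (({c, c'} : Finset _) : Set _) := by
    rw [coe_pair, SimpleGraph.isClique_pair]
    exact fun _ => ⟨hne, by simp only [c, c', mul_inv_cancel, inv_mul_cancel]⟩
  simpa [card_pair hne] using hclique.card_le_cliqueNum

theorem cliqueNum_commGraph_S3_prod_cyclic (n : ℕ) (hn : 0 < n) :
    (commGraph (Equiv.Perm (Fin 3) × Multiplicative (ZMod n))).cliqueNum = 2 * n := by
  have : NeZero n := ⟨hn.ne'⟩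
  rw [cliqueNum_commGraph_prod, cliqueNum_commGraph_perm_fin_three]
  exact congrArg (2 * ·) (Nat.card_zmod n)
end

section
/- For each n ∈ ℕ with n ≥ 2, there exists a finite non-commutative Clifford semigroup S such that the clique number of the commuting graph of S equals n. -/
/-!
Take the strong semilattice of groups `G > S₃` with `G = ℤ/m × ℤ/2` and structure map
`G → {1, (0 1)}` reading off the second coordinate. As `G` is commutative, two elements commute
iff their images under the retraction onto `S₃` do, so the non-central elements are those with
non-trivial image. A clique containing an element over `(0 1)` lies in the preimage of the
centraliser of `(0 1)`, i.e. among the `m + 1` elements over `(0 1)`; any other clique lies in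
`S₃` and has at most two elements.
-/

open Equiv Finset

section PermFinThree

lemma perm_fin_three_mem_center_iff (y : Perm (Fin 3)) :
    y ∈ Set.center (Perm (Fin 3)) ↔ y = 1 := by
  rw [Semigroup.mem_center_iff]
  revert y
  decide

lemma perm_fin_three_eq_swap_of_commute {y : Perm (Fin 3)} (hy : y ≠ 1)
    (h : swap 0 1 * y = y * swap 0 1) : y = swap 0 1 := by
  revert y
  decide

set_option synthInstance.maxSize 400 in
lemma perm_fin_three_card_le_two_of_pairwise_commute {s : Finset (Perm (Fin 3))} (h1 : 1 ∉ s)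
    (hs : (s : Set (Perm (Fin 3))).Pairwise Commute) : #s ≤ 2 := by
  have no_triangle : ∀ a b c : Perm (Fin 3), a ≠ 1 → b ≠ 1 → c ≠ 1 → a ≠ b → a ≠ c → b ≠ c →
      a * b = b * a → a * c = c * a → b * c = c * b → False := by
    decide
  by_contra! hcard
  obtain ⟨a, ha, b, hb, c, hc, hab, hac, hbc⟩ := two_lt_card.mp hcard
  exact no_triangle a b c (ne_of_mem_of_not_mem ha h1) (ne_of_mem_of_not_mem hb h1)
    (ne_of_mem_of_not_mem hc h1) hab hac hbc (hs ha hb hab) (hs ha hc hac) (hs hb hc hbc)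

end PermFinThree

/-- The strong semilattice of groups over the chain `G > H` with structure map `φ`: the disjoint
union `G ⊔ H`, where a mixed product is computed in `H` after mapping the factor from `G`
through `φ`. -/
inductive StrongChain {G H : Type*} [Group G] [Group H] (φ : G →* H)
  | upper : G → StrongChain φ
  | lower : H → StrongChain φ

namespace StrongChain

section

variable {G H : Type*} [Group G] [Group H] {φ : G →* H}

def equivSum : StrongChain φ ≃ G ⊕ H where
  toFun
    | upper a => Sum.inl a
    | lower y => Sum.inr y
  invFun
    | Sum.inl a => upper a
    | Sum.inr y => lower y
  left_inv x := by cases x <;> rfl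
  right_inv x := by cases x <;> rfl

instance [Fintype G] [Fintype H] : Fintype (StrongChain φ) := Fintype.ofEquiv _ equivSum.symm

instance : Mul (StrongChain φ) where
  mul
    | upper a, upper b => upper (a * b)
    | upper a, lower y => lower (φ a * y)
    | lower y, upper a => lower (y * φ a)
    | lower y, lower z => lower (y * z)

instance : Inv (StrongChain φ) where
  inv
    | upper a => upper a⁻¹
    | lower y => lower y⁻¹

@[simp] lemma upper_mul_upper (a b : G) : (upper a * upper b : StrongChain φ) = upper (a * b) := rfl
@[simp] lemma upper_mul_lower (a : G) (y : H) :
    (upper a * lower y : StrongChain φ) = lower (φ a * y) := rfl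
@[simp] lemma lower_mul_upper (y : H) (a : G) :
    (lower y * upper a : StrongChain φ) = lower (y * φ a) := rfl
@[simp] lemma lower_mul_lower (y z : H) : (lower y * lower z : StrongChain φ) = lower (y * z) := rfl
@[simp] lemma inv_upper (a : G) : (upper a : StrongChain φ)⁻¹ = upper a⁻¹ := rfl
@[simp] lemma inv_lower (y : H) : (lower y : StrongChain φ)⁻¹ = lower y⁻¹ := rfl

instance : Semigroup (StrongChain φ) where
  mul_assoc x y z := by
    cases x <;> cases y <;> cases z <;> simp [mul_assoc]

lemma inv_inv (x : StrongChain φ) : x⁻¹⁻¹ = x := by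
  cases x <;> simp

lemma mul_inv_mul (x : StrongChain φ) : x * x⁻¹ * x = x := by
  cases x <;> simp

lemma inv_mul_eq_mul_inv (x : StrongChain φ) : x⁻¹ * x = x * x⁻¹ := by
  cases x <;> simp

lemma mem_center_of_mul_self {e : StrongChain φ} (he : e * e = e) :
    e ∈ Set.center (StrongChain φ) := by
  rw [Semigroup.mem_center_iff]
  cases e with
  | upper a =>
    obtain rfl : a = 1 := by simpa using he
    rintro (b | z) <;> simp
  | lower y =>
    obtain rfl : y = 1 := by simpa using he
    rintro (b | z) <;> simp

def proj : StrongChain φ →ₙ* H where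
  toFun
    | upper a => φ a
    | lower y => y
  map_mul' := by rintro (a | y) (b | z) <;> simp

@[simp] lemma proj_upper (a : G) : proj (upper a : StrongChain φ) = φ a := rfl
@[simp] lemma proj_lower (y : H) : proj (lower y : StrongChain φ) = y := rfl

lemma card_filter_proj_eq [Fintype G] [Fintype H] [DecidableEq H] (y : H) :
    #{x : StrongChain φ | proj x = y} = #{a | φ a = y} + 1 := by
  rw [card_filter, ← equivSum.symm.sum_comp, Fintype.sum_sum_type]
  change (∑ a, if φ a = y then 1 else 0) + ∑ z, (if z = y then 1 else 0) = _
  rw [← card_filter, sum_ite_eq' univ y, if_pos (mem_univ y)]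

end

section

variable {G H : Type*} [CommGroup G] [Group H] {φ : G →* H}

lemma commute_iff {x y : StrongChain φ} : Commute x y ↔ Commute (proj x) (proj y) := by
  cases x with
  | upper a => cases y with
    | upper b => simp [Commute, SemiconjBy, ← map_mul, mul_comm a b]
    | lower z => simp [Commute, SemiconjBy]
  | lower u => cases y <;> simp [Commute, SemiconjBy]

lemma mem_center_iff {x : StrongChain φ} :
    x ∈ Set.center (StrongChain φ) ↔ proj x ∈ Set.center H := by
  simp only [Semigroup.mem_center_iff]
  refine ⟨fun h y => commute_iff.1 (h (lower y)), fun h z => ?_⟩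
  exact commute_iff.2 (h (proj z))

end

section

variable {G : Type*} [CommGroup G] {φ : G →* Perm (Fin 3)}

lemma mem_center_iff_proj_eq_one {x : StrongChain φ} :
    x ∈ Set.center (StrongChain φ) ↔ proj x = 1 := by
  rw [mem_center_iff, perm_fin_three_mem_center_iff]

lemma injOn_proj (hφ : ∀ a, φ a = 1 ∨ φ a = swap 0 1) :
    {x : StrongChain φ | proj x ≠ 1 ∧ proj x ≠ swap 0 1}.InjOn proj := by
  have eq_lower : ∀ x ∈ {x : StrongChain φ | proj x ≠ 1 ∧ proj x ≠ swap 0 1}, x = lower (proj x)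
    | upper a, ⟨h1, hswap⟩ => ((hφ a).elim h1 hswap).elim
    | lower _, _ => rfl
  intro x hx y hy h
  rw [eq_lower x hx, eq_lower y hy, h]

variable [Fintype G]

lemma exists_isClique_card_eq :
    ∃ s : Finset {x : StrongChain φ // x ∉ Set.center (StrongChain φ)},
      (commGraph (StrongChain φ)).IsClique (s : Set _) ∧ #s = #{a | φ a = swap 0 1} + 1 := by
  classical
  refine ⟨({x | proj x = swap 0 1} : Finset (StrongChain φ)).subtype (· ∉ Set.center _), ?_, ?_⟩
  · intro v hv w hw hvw
    rw [mem_coe, mem_subtype, mem_filter] at hv hw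
    exact ⟨hvw, commute_iff.2 (by rw [hv.2, hw.2]; exact Commute.refl _)⟩
  · rw [card_subtype, filter_true_of_mem, card_filter_proj_eq]
    intro x hx
    rw [mem_center_iff_proj_eq_one, (mem_filter.1 hx).2]
    decide

lemma card_le_of_isClique (hφ : ∀ a, φ a = 1 ∨ φ a = swap 0 1) (hne : ∃ a, φ a = swap 0 1)
    {s : Finset {x : StrongChain φ // x ∉ Set.center (StrongChain φ)}}
    (hs : (commGraph (StrongChain φ)).IsClique (s : Set _)) :
    #s ≤ #{a | φ a = swap 0 1} + 1 := by
  classical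
  have proj_ne_one (v : {x : StrongChain φ // x ∉ Set.center (StrongChain φ)}) : proj v.1 ≠ 1 :=
    mem_center_iff_proj_eq_one.not.1 v.2
  by_cases hswap : ∃ v ∈ s, proj v.1 = swap 0 1
  · obtain ⟨v, hv, hvswap⟩ := hswap
    rw [← card_filter_proj_eq (φ := φ)]
    refine card_le_card_of_injOn Subtype.val (fun w hw => ?_) Subtype.val_injective.injOn
    simp only [coe_filter, mem_univ, true_and, Set.mem_ofPred_eq]
    rcases eq_or_ne w v with rfl | hwv
    · exact hvswap
    · have hcomm := commute_iff.1 (hs hv hw hwv.symm).2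
      rw [hvswap] at hcomm
      exact perm_fin_three_eq_swap_of_commute (proj_ne_one w) hcomm
  · push Not at hswap
    obtain ⟨a, ha⟩ := hne
    have hpos : 0 < #{a | φ a = swap 0 1} := card_pos.2 ⟨a, by simpa using ha⟩
    calc #s = #(s.image (proj ∘ Subtype.val)) :=
          (card_image_of_injOn ((injOn_proj hφ).comp Subtype.val_injective.injOn
            fun v hv => ⟨proj_ne_one v, hswap v hv⟩)).symm
      _ ≤ 2 := by
        refine perm_fin_three_card_le_two_of_pairwise_commute (by simp [proj_ne_one]) ?_
        simp only [coe_image]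
        rintro _ ⟨v, hv, rfl⟩ _ ⟨w, hw, rfl⟩ hvw
        exact commute_iff.1 (hs hv hw (by rintro rfl; exact hvw rfl)).2
      _ ≤ #{a | φ a = swap 0 1} + 1 := by omega

theorem cliqueNum_commGraph (hφ : ∀ a, φ a = 1 ∨ φ a = swap 0 1) (hne : ∃ a, φ a = swap 0 1) :
    (commGraph (StrongChain φ)).cliqueNum = #{a | φ a = swap 0 1} + 1 := by
  obtain ⟨s, hs⟩ := (commGraph (StrongChain φ)).exists_isNClique_cliqueNum
  obtain ⟨t, ht, htcard⟩ := exists_isClique_card_eq (φ := φ)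
  refine le_antisymm ?_ ?_
  · rw [← hs.card_eq]
    exact card_le_of_isClique hφ hne hs.isClique
  · rw [← htcard]
    exact ht.card_le_cliqueNum

end

end StrongChain

def swapHom : Multiplicative (ZMod 2) →* Perm (Fin 3) where
  toFun ε := if ε = 1 then 1 else swap 0 1
  map_one' := if_pos rfl
  map_mul' := by decide

lemma swapHom_eq_one_or_eq_swap (ε : Multiplicative (ZMod 2)) :
    swapHom ε = 1 ∨ swapHom ε = swap 0 1 := by
  revert ε
  decide

lemma card_filter_swapHom_comp_snd_eq_swap (A : Type*) [MulOneClass A] [Fintype A] :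
    #{a | swapHom.comp (MonoidHom.snd A (Multiplicative (ZMod 2))) a = swap 0 1} =
      Fintype.card A := by
  have h : ∑ ε : Multiplicative (ZMod 2), (if swapHom ε = swap 0 1 then 1 else 0) = 1 := by
    decide
  rw [card_filter, Fintype.sum_prod_type, Fintype.card_eq_sum_ones]
  exact sum_congr rfl fun _ _ => by convert h; rfl

open StrongChain in
theorem exists_clifford_semigroup_cliqueNum_eq (n : ℕ) (hn : 2 ≤ n) :
    ∃ (S : Type) (_ : Semigroup S) (_ : Fintype S) (_ : Inv S),
      --  is a Clifford semigroup
      (∀ x : S, x⁻¹⁻¹ = x) ∧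
      (∀ x : S, x * x⁻¹ * x = x) ∧
      (∀ x : S, x⁻¹ * x = x * x⁻¹) ∧
      (∀ e : S, e * e = e → ∀ y : S, e * y = y * e) ∧
      --  is non-commutative
      (∃ a b : S, a * b ≠ b * a) ∧
      -- and the clique number of its commuting graph is 
      (commGraph S).cliqueNum = n := by
  have : NeZero (n - 1) := ⟨by omega⟩
  let φ := swapHom.comp (MonoidHom.snd (Multiplicative (ZMod (n - 1))) (Multiplicative (ZMod 2)))
  have hφ (a) : φ a = 1 ∨ φ a = swap 0 1 := swapHom_eq_one_or_eq_swap a.2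
  have hne : ∃ a, φ a = swap 0 1 := ⟨(1, Multiplicative.ofAdd 1), rfl⟩
  refine ⟨StrongChain φ, inferInstance, inferInstance, inferInstance, StrongChain.inv_inv,
    mul_inv_mul, inv_mul_eq_mul_inv,
    fun e he y => (Semigroup.mem_center_iff.1 (mem_center_of_mul_self he) y).symm,
    ⟨lower (swap 0 2), lower (swap 0 1), by
      simp only [lower_mul_lower, ne_eq, lower.injEq]; decide⟩, ?_⟩
  rw [cliqueNum_commGraph hφ hne, card_filter_swapHom_comp_snd_eq_swap,
    Fintype.card_multiplicative, ZMod.card]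
  omega
end

section
/- There is no finite non-commutative inverse semigroup whose commuting graph has clique number equal to 1. Equivalently, every finite non-commutative inverse semigroup contains two distinct non-central elements that commute with each other. -/
/-- An inverse semigroup: a semigroup with a unary operation `⁻¹` such that
`(x⁻¹)⁻¹ = x`, `x * x⁻¹ * x = x`, `(x*y)⁻¹ = y⁻¹ * x⁻¹`, and idempotents `x*x⁻¹` commute. -/
class InverseSemigroup (S : Type*) extends Semigroup S, Inv S where
  inv_inv : ∀ x : S, x⁻¹⁻¹ = x
  mul_inv_mul : ∀ x : S, x * x⁻¹ * x = x
  mul_inv_rev : ∀ x y : S, (x * y)⁻¹ = y⁻¹ * x⁻¹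
  idem_comm : ∀ x y : S, (x * x⁻¹) * (y * y⁻¹) = (y * y⁻¹) * (x * x⁻¹)

/-!
Suppose no two distinct non-central elements commute. Idempotents commute, so there is at most one
non-central idempotent `e`, and for non-central, non-idempotent `x` the idempotent `x x⁻¹`
cannot be `e`: otherwise `x⁻¹ x` and `x²` are forced into the center and
`x e = x² x⁻¹ = x⁻¹ x x = x = e x`.
Hence `x x⁻¹` and `x⁻¹ x` are central, so they coincide, `x` commutes with `x⁻¹`, and `x = x⁻¹`
with `x²` central. For such `t` the conjugate `t y t` satisfies `t (t y t) = y t` and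
`(t y t) t = t y`; as `t e t` is an idempotent commuting with `e`, this makes `t` commute with `e`.
Two such elements `a, b` commute too: `ab` and `ba` commute, and if one of them is central then
`ab = (ab) a² = a (ba) a = ba`, up to symmetry. So the semigroup would be commutative.
-/

theorem SimpleGraph.cliqueNum_ne_one_of_adj {α : Type*} {G : SimpleGraph α} {u v : α}
    (huv : G.Adj u v) : G.cliqueNum ≠ 1 := by
  classical
  intro h
  -- `sSup` of an unbounded set of naturals is `0`.
  have hbdd : BddAbove {n | ∃ s, G.IsNClique n s} := by
    by_contra hb
    rw [SimpleGraph.cliqueNum, csSup_of_not_bddAbove hb, csSup_empty] at h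
    exact zero_ne_one h
  have hpair : G.IsNClique 2 {u, v} :=
    ⟨by simpa using G.isClique_pair.2 fun _ => huv, Finset.card_pair huv.ne⟩
  have h2 : 2 ≤ G.cliqueNum := le_csSup hbdd ⟨_, hpair⟩
  omega

namespace Semigroup

variable {S : Type*} [Semigroup S] {t : S}

theorem self_mul_conj_eq (h3 : t * t * t = t) (h2 : t * t ∈ Set.center S) (y : S) :
    t * (t * y * t) = y * t := by
  calc t * (t * y * t) = t * t * y * t := by simp only [mul_assoc]
    _ = y * (t * t) * t := by rw [(Set.mem_center_iff.1 h2).comm y]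
    _ = y * t := by rw [mul_assoc, h3]

theorem conj_mul_self_eq (h3 : t * t * t = t) (h2 : t * t ∈ Set.center S) (y : S) :
    t * y * t * t = t * y := by
  calc t * y * t * t = t * (y * (t * t)) := by simp only [mul_assoc]
    _ = t * t * t * y := by rw [← (Set.mem_center_iff.1 h2).comm y]; simp only [mul_assoc]
    _ = t * y := by rw [h3]

theorem isIdempotentElem_conj (h3 : t * t * t = t) (h2 : t * t ∈ Set.center S) {e : S}
    (he : IsIdempotentElem e) : IsIdempotentElem (t * e * t) := by
  calc t * e * t * (t * e * t) = t * e * t * t * (e * t) := by simp only [mul_assoc]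
    _ = t * (e * e) * t := by rw [conj_mul_self_eq h3 h2]; simp only [mul_assoc]
    _ = t * e * t := by rw [he.eq]

theorem commute_mul_mul_of_mem_center {a b : S} (ha : a * a ∈ Set.center S)
    (hb : b * b ∈ Set.center S) : Commute (a * b) (b * a) := by
  calc a * b * (b * a) = a * (b * b) * a := by simp only [mul_assoc]
    _ = a * a * (b * b) := by
      rw [mul_assoc a (b * b) a, ((Set.mem_center_iff.1 hb).comm a).eq]; simp only [mul_assoc]
    _ = b * b * (a * a) := ((Set.mem_center_iff.1 ha).comm (b * b)).eq
    _ = b * (a * a) * b := by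
      rw [mul_assoc b (a * a) b, ((Set.mem_center_iff.1 ha).comm b).eq]; simp only [mul_assoc]
    _ = b * a * (a * b) := by simp only [mul_assoc]

theorem commute_of_mul_mem_center (h3 : t * t * t = t) (h2 : t * t ∈ Set.center S) {y : S}
    (hyt : y * t ∈ Set.center S) : Commute t y := by
  calc t * y = t * y * t * t := (conj_mul_self_eq h3 h2 y).symm
    _ = t * (y * t) * t := by simp only [mul_assoc]
    _ = y * t * t * t := by rw [← (Set.mem_center_iff.1 hyt).comm t]
    _ = y * t := by rw [mul_assoc, mul_assoc, ← mul_assoc t, h3]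

end Semigroup

namespace InverseSemigroup

variable {S : Type*} [InverseSemigroup S]

theorem inv_mul_mul_inv (x : S) : x⁻¹ * x * x⁻¹ = x⁻¹ := by
  simpa only [InverseSemigroup.inv_inv] using mul_inv_mul x⁻¹

theorem isIdempotentElem_mul_inv (x : S) : IsIdempotentElem (x * x⁻¹) := by
  rw [IsIdempotentElem, ← mul_assoc, mul_inv_mul]

theorem isIdempotentElem_inv_mul (x : S) : IsIdempotentElem (x⁻¹ * x) := by
  simpa only [InverseSemigroup.inv_inv] using isIdempotentElem_mul_inv x⁻¹

theorem inv_eq_self_of_isIdempotentElem {e : S} (he : IsIdempotentElem e) : e⁻¹ = e := by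
  have he' : e⁻¹ * e⁻¹ = e⁻¹ := by rw [← InverseSemigroup.mul_inv_rev, he.eq]
  have h := idem_comm e e⁻¹
  rw [InverseSemigroup.inv_inv] at h
  calc e⁻¹ = e⁻¹ * (e * e) * e⁻¹ := by rw [he.eq, inv_mul_mul_inv]
    _ = e⁻¹ * e * (e * e⁻¹) := by simp only [mul_assoc]
    _ = e * e⁻¹ * (e⁻¹ * e) := h.symm
    _ = e * (e⁻¹ * e⁻¹) * e := by simp only [mul_assoc]
    _ = e := by rw [he', mul_inv_mul]

theorem commute_of_isIdempotentElem {e f : S} (he : IsIdempotentElem e)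
    (hf : IsIdempotentElem f) : Commute e f := by
  have h := idem_comm e f
  rwa [inv_eq_self_of_isIdempotentElem he, inv_eq_self_of_isIdempotentElem hf, he.eq,
    hf.eq] at h

theorem inv_mem_center_of_mem_center {x : S} (hx : x ∈ Set.center S) :
    x⁻¹ ∈ Set.center S :=
  Semigroup.mem_center_iff.2 fun g => by
    simpa only [InverseSemigroup.mul_inv_rev, InverseSemigroup.inv_inv] using
      congrArg (·⁻¹) ((Set.mem_center_iff.1 hx).comm g⁻¹)

theorem inv_mem_center_iff {x : S} : x⁻¹ ∈ Set.center S ↔ x ∈ Set.center S :=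
  ⟨fun h => InverseSemigroup.inv_inv x ▸ inv_mem_center_of_mem_center h,
    inv_mem_center_of_mem_center⟩

theorem mul_inv_eq_inv_mul_of_mem_center {x : S} (he : x * x⁻¹ ∈ Set.center S)
    (hf : x⁻¹ * x ∈ Set.center S) : x * x⁻¹ = x⁻¹ * x :=
  calc x * x⁻¹ = x * (x⁻¹ * x) * x⁻¹ := by rw [← mul_assoc, mul_inv_mul]
    _ = x⁻¹ * x * (x * x⁻¹) := by
      rw [← ((Set.mem_center_iff.1 hf).comm x).eq]; simp only [mul_assoc]
    _ = x * x⁻¹ * (x⁻¹ * x) :=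
      (commute_of_isIdempotentElem (isIdempotentElem_mul_inv x) (isIdempotentElem_inv_mul x)).symm
    _ = x⁻¹ * (x * x⁻¹) * x := by
      rw [← ((Set.mem_center_iff.1 he).comm x⁻¹).eq]; simp only [mul_assoc]
    _ = x⁻¹ * x := by rw [← mul_assoc, inv_mul_mul_inv]

end InverseSemigroup

/-- The commuting graph `commGraph S` has no edges. -/
def NoncentralCommutingEq (S : Type*) [Mul S] : Prop :=
  ∀ ⦃x y : S⦄, x ∉ Set.center S → y ∉ Set.center S → Commute x y → x = y

namespace NoncentralCommutingEq

open InverseSemigroup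

variable {S : Type*} [InverseSemigroup S]

theorem mul_inv_mem_center (H : NoncentralCommutingEq S) {x : S} (hx : x ∉ Set.center S)
    (hxx : ¬IsIdempotentElem x) : x * x⁻¹ ∈ Set.center S := by
  by_contra he
  have hxf : x * (x⁻¹ * x) = x := by rw [← mul_assoc, mul_inv_mul]
  have hxe : x * (x * x⁻¹) ≠ x := by
    intro h
    have hcomm : Commute x (x * x⁻¹) := by rw [Commute, SemiconjBy, h, mul_inv_mul]
    exact hxx (H hx he hcomm ▸ isIdempotentElem_mul_inv x)
  have hf : x⁻¹ * x ∈ Set.center S := by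
    by_contra hf
    have hfe := H hf he <| InverseSemigroup.commute_of_isIdempotentElem
      (isIdempotentElem_inv_mul x) (isIdempotentElem_mul_inv x)
    exact hxe (hfe ▸ hxf)
  have hsq : x * x ∈ Set.center S := by
    by_contra hsq
    exact hxx (H hx hsq ((Commute.refl x).mul_right (Commute.refl x))).symm
  apply hxe
  calc x * (x * x⁻¹) = x⁻¹ * (x * x) := by
        rw [← mul_assoc, ((Set.mem_center_iff.1 hsq).comm x⁻¹).eq]
    _ = x * (x⁻¹ * x) := by rw [← mul_assoc, ((Set.mem_center_iff.1 hf).comm x).eq]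
    _ = x := hxf

theorem inv_eq_self_and_mul_self_mem_center (H : NoncentralCommutingEq S) {x : S}
    (hx : x ∉ Set.center S) (hxx : ¬IsIdempotentElem x) : x⁻¹ = x ∧ x * x ∈ Set.center S := by
  have hx' : x⁻¹ ∉ Set.center S := mt inv_mem_center_iff.1 hx
  have hxx' : ¬IsIdempotentElem x⁻¹ := fun h =>
    hxx (by rwa [← inv_eq_self_of_isIdempotentElem h, InverseSemigroup.inv_inv] at h)
  have he := H.mul_inv_mem_center hx hxx
  have hf := H.mul_inv_mem_center hx' hxx'
  rw [InverseSemigroup.inv_inv] at hf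
  have hinv : x⁻¹ = x := (H hx hx' (mul_inv_eq_inv_mul_of_mem_center he hf)).symm
  rw [hinv] at he
  exact ⟨hinv, he⟩

theorem commute_of_isIdempotentElem (H : NoncentralCommutingEq S) {t e : S} (ht : t⁻¹ = t)
    (htt : t * t ∈ Set.center S) (he : IsIdempotentElem e) (he' : e ∉ Set.center S) :
    Commute t e := by
  have h3 : t * t * t = t := by simpa only [ht] using mul_inv_mul t
  have hleft := Semigroup.self_mul_conj_eq h3 htt e
  have hright := Semigroup.conj_mul_self_eq h3 htt e
  by_cases hz : t * e * t ∈ Set.center S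
  · exact hright.symm.trans (((Set.mem_center_iff.1 hz).comm t).eq.trans hleft)
  · have hze : t * e * t = e := H hz he' <| InverseSemigroup.commute_of_isIdempotentElem
      (Semigroup.isIdempotentElem_conj h3 htt he) he
    rw [hze] at hright
    exact hright.symm

theorem commute_of_inv_eq_self (H : NoncentralCommutingEq S) {a b : S} (ha : a⁻¹ = a)
    (hb : b⁻¹ = b) (haa : a * a ∈ Set.center S) (hbb : b * b ∈ Set.center S) : Commute a b := by
  by_cases hba : b * a ∈ Set.center S
  · exact Semigroup.commute_of_mul_mem_center (by simpa only [ha] using mul_inv_mul a) haa hba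
  by_cases hab : a * b ∈ Set.center S
  · exact (Semigroup.commute_of_mul_mem_center (by simpa only [hb] using mul_inv_mul b) hbb
      hab).symm
  exact H hab hba (Semigroup.commute_mul_mul_of_mem_center haa hbb)

theorem commute (H : NoncentralCommutingEq S) (a b : S) : Commute a b := by
  by_contra hab
  have ha : a ∉ Set.center S := fun h => hab ((Set.mem_center_iff.1 h).comm b)
  have hb : b ∉ Set.center S := fun h => hab ((Set.mem_center_iff.1 h).comm a).symm
  by_cases hai : IsIdempotentElem a <;> by_cases hbi : IsIdempotentElem b
  · exact hab (InverseSemigroup.commute_of_isIdempotentElem hai hbi)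
  · obtain ⟨hb1, hb2⟩ := H.inv_eq_self_and_mul_self_mem_center hb hbi
    exact hab (H.commute_of_isIdempotentElem hb1 hb2 hai ha).symm
  · obtain ⟨ha1, ha2⟩ := H.inv_eq_self_and_mul_self_mem_center ha hai
    exact hab (H.commute_of_isIdempotentElem ha1 ha2 hbi hb)
  · obtain ⟨ha1, ha2⟩ := H.inv_eq_self_and_mul_self_mem_center ha hai
    obtain ⟨hb1, hb2⟩ := H.inv_eq_self_and_mul_self_mem_center hb hbi
    exact hab (H.commute_of_inv_eq_self ha1 hb1 ha2 hb2)

end NoncentralCommutingEq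

theorem inverse_semigroup_cliqueNum_ne_one_general {S : Type*} [InverseSemigroup S]
    (hnc : ∃ a b : S, a * b ≠ b * a) :
    (commGraph S).cliqueNum ≠ 1 ∧
    ∃ x y : S, x ≠ y ∧ x ∉ Set.center S ∧ y ∉ Set.center S ∧ x * y = y * x := by
  have hpair : ∃ x y : S, x ≠ y ∧ x ∉ Set.center S ∧ y ∉ Set.center S ∧ x * y = y * x := by
    by_contra! h
    obtain ⟨a, b, hab⟩ := hnc
    have H : NoncentralCommutingEq S := fun x y hx hy hxy =>
      Classical.byContradiction fun hne => h x y hne hx hy hxy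
    exact hab (H.commute a b)
  obtain ⟨x, y, hxy, hx, hy, hc⟩ := hpair
  have hadj : (commGraph S).Adj ⟨x, hx⟩ ⟨y, hy⟩ := ⟨fun h => hxy (congrArg Subtype.val h), hc⟩
  exact ⟨SimpleGraph.cliqueNum_ne_one_of_adj hadj, x, y, hxy, hx, hy, hc⟩

theorem inverse_semigroup_cliqueNum_ne_one {S : Type*} [InverseSemigroup S] [Fintype S]
    (hnc : ∃ a b : S, a * b ≠ b * a) :
    (commGraph S).cliqueNum ≠ 1 ∧
    ∃ x y : S, x ≠ y ∧ x ∉ Set.center S ∧ y ∉ Set.center S ∧ x * y = y * x :=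
  inverse_semigroup_cliqueNum_ne_one_general hnc
end

section
/- Let S be a finite non-commutative Clifford semigroup and suppose x₁, ..., xₙ ∈ S are non-central elements forming a path in the commuting graph of S (consecutive elements commute) with x₁ x_i = x_n x_i for all i ∈ {1,...,n}. Then x₁ = x_n. In other words, the commuting graph of a Clifford semigroup contains no left paths. -/
/-!
Only the two ends `a = x 0`, `b = x (Fin.last n)` of the path matter: the left-path condition
at them reads `a * a = b * a` and `a * b = b * b`. Multiplying on the right by `a⁻¹`, resp. `b⁻¹`,
gives `a = b * e` and `b = a * f` for the central idempotents `e = a * a⁻¹`, `f = b * b⁻¹`, whence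
`b = b * e * f = b * f * e = b * e = a`.
-/

namespace CliffordSemigroup

variable {S : Type*} [CliffordSemigroup S]

theorem isIdempotentElem_mul_inv_self (x : S) : IsIdempotentElem (x * x⁻¹) := by
  rw [IsIdempotentElem, ← mul_assoc, mul_inv_mul]

theorem mul_inv_self_mul_comm (x y : S) : x * x⁻¹ * y = y * (x * x⁻¹) :=
  idem_central _ (isIdempotentElem_mul_inv_self x) y

theorem mul_mul_inv_self (x : S) : x * (x * x⁻¹) = x := by
  rw [← mul_inv_self_mul_comm, mul_inv_mul]

theorem eq_of_mul_self_eq_of_mul_eq_mul_self {a b : S} (h₁ : a * a = b * a)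
    (h₂ : a * b = b * b) : a = b := by
  have ha : a = b * (a * a⁻¹) := by rw [← mul_assoc, ← h₁, mul_assoc, mul_mul_inv_self]
  have hb : b = a * (b * b⁻¹) := by rw [← mul_assoc, h₂, mul_assoc, mul_mul_inv_self]
  calc a = b * (b * b⁻¹) * (a * a⁻¹) := by rw [mul_mul_inv_self, ← ha]
    _ = b * (a * a⁻¹) * (b * b⁻¹) := by rw [mul_assoc, ← mul_inv_self_mul_comm, ← mul_assoc]
    _ = b := by rw [← ha, ← hb]

end CliffordSemigroup

theorem clifford_no_left_paths_general {S : Type*} [CliffordSemigroup S]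
    (n : ℕ) (x : Fin (n + 1) → S)
    -- with the left-path condition
    (hleft : ∀ i, x 0 * x i = x (Fin.last n) * x i) :
    x 0 = x (Fin.last n) :=
  CliffordSemigroup.eq_of_mul_self_eq_of_mul_eq_mul_self (hleft 0) (hleft (Fin.last n))

theorem clifford_no_left_paths {S : Type*} [CliffordSemigroup S] [Fintype S]
    (hnc : ∃ a b : S, a * b ≠ b * a)
    (n : ℕ) (x : Fin (n + 1) → S)
    -- the `x i` are vertices of the commuting graph
    (hvert : ∀ i, x i ∉ Set.center S)
    -- forming a path: consecutive vertices are distinct and commute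
    (hadj : ∀ i : Fin n, x i.castSucc ≠ x i.succ ∧
        x i.castSucc * x i.succ = x i.succ * x i.castSucc)
    -- with the left-path condition
    (hleft : ∀ i, x 0 * x i = x (Fin.last n) * x i) :
    x 0 = x (Fin.last n) :=
  clifford_no_left_paths_general n x hleft
end

section
/- Let X be a set with |X| ≥ 3 and let x₁, x₂, x₃ ∈ X be pairwise distinct. In the symmetric inverse monoid on X, the partial maps α (with domain {x₁}, sending x₁ to x₂) and β (with domain {x₁}, sending x₁ to x₃) satisfy: α ≠ β, αβ = βα, α² = βα, and β² = αβ (all four products being the empty map). Hence α — β is a left path of length 1 in the commuting graph of the symmetric inverse monoid, so the knit degree of the symmetric inverse monoid on X equals 1. -/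
/-- The symmetric inverse monoid: partial injective maps under composition
(`f * g = f.trans g`, i.e. apply `f` first, then `g`). -/
instance pequivSemigroup {X : Type*} : Semigroup (X ≃. X) where
  mul f g := f.trans g
  mul_assoc := PEquiv.trans_assoc

/-- A left path of length `n` in the commuting graph of `S`: a path
`x 0 — x 1 — ⋯ — x n` of pairwise distinct non-central elements whose consecutive
vertices commute, with `x 0 ≠ x n` and `x 0 * x i = x n * x i` for all `i`. -/
def IsLeftPath {S : Type*} [Mul S] (n : ℕ) (x : Fin (n + 1) → S) : Prop :=
  (∀ i, x i ∉ Set.center S) ∧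
  (∀ i j, i ≠ j → x i ≠ x j) ∧
  (∀ i : Fin n, x i.castSucc * x i.succ = x i.succ * x i.castSucc) ∧
  x 0 ≠ x (Fin.last n) ∧
  ∀ i, x 0 * x i = x (Fin.last n) * x i

/-- The knit degree of `S`: the length of a shortest left path in its commuting graph. -/
noncomputable def knitDegree (S : Type*) [Mul S] : ℕ :=
  sInf {n | ∃ x : Fin (n + 1) → S, IsLeftPath n x}

/-!
The maps `α = [x₁ ↦ x₂]` and `β = [x₁ ↦ x₃]` have images disjoint from their common domain,
so every product of two of them is the empty map; this makes all the equations of a left path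
`α — β` hold trivially. Each single-point map `[a ↦ b]` with `a ≠ b` is non-central, since
`[a ↦ b][b ↦ a] = [a ↦ a]` while `[b ↦ a][a ↦ b] = [b ↦ b]`. Finally no left path has length
`0`, because its end points must differ.
-/

section LeftPath

variable {S : Type*} [Mul S]

theorem IsLeftPath.length_pos {n : ℕ} {x : Fin (n + 1) → S} (hx : IsLeftPath n x) : 0 < n := by
  rcases Nat.eq_zero_or_pos n with rfl | hn
  · exact absurd rfl hx.2.2.2.1
  · exact hn

theorem knitDegree_eq_one_of_isLeftPath {x : Fin 2 → S} (hx : IsLeftPath 1 x) :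
    knitDegree S = 1 :=
  le_antisymm (Nat.sInf_le ⟨x, hx⟩) <|
    le_csInf ⟨1, x, hx⟩ fun _ ⟨_, hy⟩ => hy.length_pos

theorem isLeftPath_pair {a b : S} (ha : a ∉ Set.center S) (hb : b ∉ Set.center S)
    (hab : a ≠ b) (h_comm : a * b = b * a) (h_sq_a : a * a = b * a) (h_sq_b : a * b = b * b) :
    IsLeftPath 1 ![a, b] := by
  refine ⟨?_, ?_, ?_, hab, ?_⟩
  · intro i
    fin_cases i <;> assumption
  · intro i j hij
    fin_cases i <;> fin_cases j
    all_goals first | exact absurd rfl hij | exact hab | exact hab.symm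
  · intro i
    fin_cases i
    exact h_comm
  · intro i
    fin_cases i
    · exact h_sq_a
    · exact h_sq_b

end LeftPath

namespace PEquiv

variable {X : Type*} [DecidableEq X]

theorem single_injective_right (a : X) : Function.Injective (single a : X → X ≃. X) := by
  intro b c h
  simpa [single_apply] using congrArg (· a) h

theorem single_notMem_center {a b : X} (h : a ≠ b) : single a b ∉ Set.center (X ≃. X) := by
  intro hmem
  have h_comm : (single b a).trans (single a b) = (single a b).trans (single b a) :=
    Semigroup.mem_center_iff.mp hmem (single b a)
  rw [single_trans_single, single_trans_single] at h_comm
  simpa [single_apply, single_apply_of_ne h.symm] using congrArg (· a) h_comm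

end PEquiv

theorem knitDegree_symmetric_inverse_monoid_eq_one {X : Type*} [DecidableEq X]
    (x₁ x₂ x₃ : X) (h12 : x₁ ≠ x₂) (h13 : x₁ ≠ x₃) (h23 : x₂ ≠ x₃) :
    PEquiv.single x₁ x₂ ≠ PEquiv.single x₁ x₃ ∧
    PEquiv.single x₁ x₂ * PEquiv.single x₁ x₃ = (⊥ : X ≃. X) ∧
    PEquiv.single x₁ x₃ * PEquiv.single x₁ x₂ = (⊥ : X ≃. X) ∧
    PEquiv.single x₁ x₂ * PEquiv.single x₁ x₂ = (⊥ : X ≃. X) ∧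
    PEquiv.single x₁ x₃ * PEquiv.single x₁ x₃ = (⊥ : X ≃. X) ∧
    -- hence α*β = β*α, α² = β*α and β² = α*β, so α — β is a left path of length 1
    IsLeftPath 1 ![PEquiv.single x₁ x₂, PEquiv.single x₁ x₃] ∧
    knitDegree (X ≃. X) = 1 := by
  open PEquiv in
  have hne : single x₁ x₂ ≠ single x₁ x₃ := (single_injective_right x₁).ne h23
  have hαβ : single x₁ x₂ * single x₁ x₃ = ⊥ := single_trans_single_of_ne h12.symm x₁ x₃
  have hβα : single x₁ x₃ * single x₁ x₂ = ⊥ := single_trans_single_of_ne h13.symm x₁ x₂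
  have hαα : single x₁ x₂ * single x₁ x₂ = ⊥ := single_trans_single_of_ne h12.symm x₁ x₂
  have hββ : single x₁ x₃ * single x₁ x₃ = ⊥ := single_trans_single_of_ne h13.symm x₁ x₃
  have path : IsLeftPath 1 ![single x₁ x₂, single x₁ x₃] :=
    isLeftPath_pair (single_notMem_center h12) (single_notMem_center h13) hne
      (hαβ.trans hβα.symm) (hαα.trans hβα.symm) (hαβ.trans hββ.symm)
  exact ⟨hne, hαβ, hβα, hαα, hββ, path, knitDegree_eq_one_of_isLeftPath path⟩
end

section
/- There is no finite non-commutative completely regular semigroup with knit degree 1. Equivalently, if S is a finite completely regular semigroup and x, y ∈ S satisfy x ≠ y, xy = yx, x² = yx and y² = xy, then a contradiction follows (no such pair exists). -/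
/-- `pw a n = a ^ (n+1)` in a semigroup (no identity needed). -/
private def pw {S : Type*} [Semigroup S] (a : S) : ℕ → S
  | 0 => a
  | n + 1 => pw a n * a

private lemma pw_succ {S : Type*} [Semigroup S] (a : S) (n : ℕ) :
    pw a (n + 1) = pw a n * a := rfl

private lemma pw_succ' {S : Type*} [Semigroup S] (a : S) (n : ℕ) :
    pw a (n + 1) = a * pw a n := by
  induction n with
  | zero => rfl
  | succ n ih =>
    calc pw a (n + 1 + 1) = pw a (n + 1) * a := rfl
    _ = (a * pw a n) * a := by rw [ih]
    _ = a * (pw a n * a) := mul_assoc _ _ _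
    _ = a * pw a (n + 1) := rfl

private lemma pw_add {S : Type*} [Semigroup S] (a : S) (m n : ℕ) :
    pw a m * pw a n = pw a (m + n + 1) := by
  induction n with
  | zero => rfl
  | succ n ih => rw [pw_succ, ← mul_assoc, ih]; rfl

/-- In a finite semigroup with a completely-regular `inv`, some `pw a d`
equals the idempotent `a * inv a`. -/
private lemma exists_pw_eq_idem {S : Type*} [Semigroup S] [Fintype S]
    (inv : S → S)
    (h1 : ∀ a : S, inv (inv a) = a)
    (h2 : ∀ a : S, a * inv a * a = a)
    (h3 : ∀ a : S, inv a * a = a * inv a)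
    (a : S) : ∃ d : ℕ, pw a d = a * inv a := by
  set i := inv a with hi
  set e := a * i with hedef
  have hia : i * a = e := h3 a
  have hea : e * a = a := h2 a
  have hie : i * e = i := by
    have := h2 i
    rw [h1] at this
    calc i * e = (i * a) * i := by rw [hedef, ← mul_assoc]
    _ = i := this
  have e_pw : ∀ k, e * pw a k = pw a k := by
    intro k
    induction k with
    | zero => exact hea
    | succ k ih => rw [pw_succ', ← mul_assoc, hea]
  have ipw_pw : ∀ k, pw i k * pw a k = e := by
    intro k
    induction k with
    | zero => exact hia
    | succ k ih =>
      rw [pw_succ, pw_succ' a, mul_assoc, ← mul_assoc i, hia, e_pw, ih]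
  -- finiteness gives a repetition in the powers of `a`
  obtain ⟨m, n, hmn, hpe⟩ := Finite.exists_ne_map_eq_of_infinite (pw a)
  rcases Nat.lt_or_ge m n with h | h
  · obtain ⟨d, rfl⟩ : ∃ d, n = m + d + 1 := ⟨n - m - 1, by omega⟩
    refine ⟨d, ?_⟩
    have : pw i m * pw a (m + d + 1) = pw i m * pw a m := by rw [hpe]
    rw [← pw_add, ← mul_assoc, ipw_pw, e_pw] at this
    exact this
  · have hlt : n < m := lt_of_le_of_ne h (Ne.symm hmn)
    obtain ⟨d, rfl⟩ : ∃ d, m = n + d + 1 := ⟨m - n - 1, by omega⟩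
    refine ⟨d, ?_⟩
    have : pw i n * pw a (n + d + 1) = pw i n * pw a n := by rw [← hpe]
    rw [← pw_add, ← mul_assoc, ipw_pw, e_pw] at this
    exact this

theorem completely_regular_no_knit_degree_one {S : Type*} [Semigroup S] [Fintype S]
    (inv : S → S)
    -- `S` is completely regular, witnessed by the unary operation `inv`
    (h1 : ∀ a : S, inv (inv a) = a)
    (h2 : ∀ a : S, a * inv a * a = a)
    (h3 : ∀ a : S, inv a * a = a * inv a)
    (x y : S) (hxy : x ≠ y) (hc : x * y = y * x)
    (hx : x * x = y * x) (hy : y * y = x * y) : False := by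
  set e := x * inv x with hedef
  set f := y * inv y with hfdef
  -- basic facts about e and f
  have hxe : x * e = x := by
    rw [hedef, ← h3, ← mul_assoc]; exact h2 x
  have hye : y * f = y := by
    rw [hfdef, ← h3, ← mul_assoc]; exact h2 y
  have hee : e * e = e := by
    rw [hedef]
    calc (x * inv x) * (x * inv x) = ((x * inv x) * x) * inv x := by
          simp only [mul_assoc]
    _ = x * inv x := by rw [h2]
  have hff : f * f = f := by
    rw [hfdef]
    calc (y * inv y) * (y * inv y) = ((y * inv y) * y) * inv y := by
          simp only [mul_assoc]
    _ = y * inv y := by rw [h2]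
  -- x = y * e and y = x * f
  have hxye : x = y * e := by
    have : (x * x) * inv x = (y * x) * inv x := by rw [hx]
    rwa [mul_assoc, ← hedef, hxe, mul_assoc, ← hedef] at this
  have hyxf : y = x * f := by
    have : (y * y) * inv y = (x * y) * inv y := by rw [hy]
    rwa [mul_assoc, ← hfdef, hye, mul_assoc, ← hfdef] at this
  -- x^2 = y^2, hence x^(n+2) = y^(n+2) for all n
  have hsq : pw x 1 = pw y 1 := by
    show x * x = y * y
    rw [hx, ← hc, ← hy]
  have pw_xy : ∀ k, pw x (k + 1) = pw y (k + 1) := by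
    intro k
    induction k with
    | zero => exact hsq
    | succ k ih =>
      rw [pw_succ' x, ih, pw_succ' y (k+1), pw_succ' y k, ← mul_assoc, ← mul_assoc, ← hy]
  -- powers hit idempotents
  obtain ⟨dx, hdx⟩ := exists_pw_eq_idem inv h1 h2 h3 x
  obtain ⟨dy, hdy⟩ := exists_pw_eq_idem inv h1 h2 h3 y
  rw [← hedef] at hdx
  rw [← hfdef] at hdy
  -- multiples: pw x (k*(dx+1)+dx) = e, similarly for y
  have mulx : ∀ k, pw x (k * (dx + 1) + dx) = e := by
    intro k
    induction k with
    | zero => simpa using hdx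
    | succ k ih =>
      have : pw x (k * (dx + 1) + dx) * pw x dx = pw x (k * (dx + 1) + dx + dx + 1) :=
        pw_add x _ _
      rw [ih, hdx, hee] at this
      rw [show (k + 1) * (dx + 1) + dx = k * (dx + 1) + dx + dx + 1 by ring, ← this]
  have muly : ∀ k, pw y (k * (dy + 1) + dy) = f := by
    intro k
    induction k with
    | zero => simpa using hdy
    | succ k ih =>
      have : pw y (k * (dy + 1) + dy) * pw y dy = pw y (k * (dy + 1) + dy + dy + 1) :=
        pw_add y _ _
      rw [ih, hdy, hff] at this
      rw [show (k + 1) * (dy + 1) + dy = k * (dy + 1) + dy + dy + 1 by ring, ← this]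
  -- common exponent m = 2*dx*dy + 2*dx + 2*dy + 1
  set m : ℕ := 2 * dx * dy + 2 * dx + 2 * dy + 1 with hm
  have hxm : pw x m = e := by
    have := mulx (2 * dy + 1)
    rwa [show (2 * dy + 1) * (dx + 1) + dx = m by rw [hm]; ring] at this
  have hym : pw y m = f := by
    have := muly (2 * dx + 1)
    rwa [show (2 * dx + 1) * (dy + 1) + dy = m by rw [hm]; ring] at this
  have hef : e = f := by
    rw [← hxm, ← hym, show m = (2 * dx * dy + 2 * dx + 2 * dy) + 1 by rw [hm]]
    exact pw_xy _
  -- conclude x = y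
  apply hxy
  rw [← hef] at hyxf
  calc x = y * e := hxye
  _ = (x * e) * e := by rw [← hyxf]
  _ = x * (e * e) := mul_assoc _ _ _
  _ = x * e := by rw [hee]
  _ = y := hyxf.symm
end

section
/- For every n ∈ ℕ with n ≥ 2, there exists a finite non-commutative Clifford semigroup S such that the chromatic number of the commuting graph of S equals n. -/
open Equiv

/-- The strong semilattice of groups over the two-element chain: `G` on top, `H` below, with
structure map `φ`. A product of a top and a bottom element is computed in `H` after applying `φ`. -/
inductive ChainOfGroups {G H : Type*} [Group G] [Group H] (φ : G →* H)
  | top (g : G)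
  | bot (h : H)

namespace ChainOfGroups

variable {G H : Type*} [Group G] [Group H] {φ : G →* H}

def equivSum : ChainOfGroups φ ≃ G ⊕ H where
  toFun | top g => .inl g | bot h => .inr h
  invFun | .inl g => top g | .inr h => bot h
  left_inv x := by cases x <;> rfl
  right_inv x := by cases x <;> rfl

instance [Fintype G] [Fintype H] : Fintype (ChainOfGroups φ) := Fintype.ofEquiv _ equivSum.symm

instance : Mul (ChainOfGroups φ) where
  mul
    | top a, top b => top (a * b)
    | top a, bot h => bot (φ a * h)
    | bot h, top a => bot (h * φ a)
    | bot h, bot k => bot (h * k)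

instance : Inv (ChainOfGroups φ) where
  inv
    | top a => top a⁻¹
    | bot h => bot h⁻¹

@[simp] lemma top_mul_top (a b : G) : (top a * top b : ChainOfGroups φ) = top (a * b) := rfl
@[simp] lemma top_mul_bot (a : G) (h : H) : (top a * bot h : ChainOfGroups φ) = bot (φ a * h) := rfl
@[simp] lemma bot_mul_top (h : H) (a : G) : (bot h * top a : ChainOfGroups φ) = bot (h * φ a) := rfl
@[simp] lemma bot_mul_bot (h k : H) : (bot h * bot k : ChainOfGroups φ) = bot (h * k) := rfl
@[simp] lemma inv_top (a : G) : (top a : ChainOfGroups φ)⁻¹ = top a⁻¹ := rfl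
@[simp] lemma inv_bot (h : H) : (bot h : ChainOfGroups φ)⁻¹ = bot h⁻¹ := rfl

instance : Semigroup (ChainOfGroups φ) where
  mul_assoc := by rintro (a | a) (b | b) (c | c) <;> simp [mul_assoc]

instance : InvolutiveInv (ChainOfGroups φ) where
  inv_inv := by rintro (a | a) <;> simp

lemma mul_inv_mul_self (x : ChainOfGroups φ) : x * x⁻¹ * x = x := by
  cases x <;> simp

lemma inv_mul_comm (x : ChainOfGroups φ) : x⁻¹ * x = x * x⁻¹ := by
  cases x <;> simp

lemma top_mem_center_iff {a : G} :
    (top a : ChainOfGroups φ) ∈ Set.center (ChainOfGroups φ) ↔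
      a ∈ Set.center G ∧ φ a ∈ Set.center H := by
  simp only [Semigroup.mem_center_iff]
  constructor
  · intro h
    exact ⟨fun b => top.inj (h (top b)), fun k => bot.inj (h (bot k))⟩
  · rintro ⟨hG, hH⟩ (b | k)
    · simp [hG b]
    · simp [hH k]

lemma bot_mem_center_iff {h : H} :
    (bot h : ChainOfGroups φ) ∈ Set.center (ChainOfGroups φ) ↔ h ∈ Set.center H := by
  simp only [Semigroup.mem_center_iff]
  constructor
  · intro hc k
    exact bot.inj (hc (bot k))
  · rintro hc (b | k)
    · simp [hc (φ b)]
    · simp [hc k]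

lemma mem_center_of_mul_self {e : ChainOfGroups φ} (he : e * e = e) :
    e ∈ Set.center (ChainOfGroups φ) := by
  cases e with
  | top a =>
    obtain rfl : a = 1 := mul_eq_left.mp (top.inj he)
    simp [top_mem_center_iff, Set.one_mem_center]
  | bot h =>
    obtain rfl : h = 1 := mul_eq_left.mp (bot.inj he)
    simp [bot_mem_center_iff, Set.one_mem_center]

end ChainOfGroups

lemma SimpleGraph.chromaticNumber_eq_card_of_pairwise_adj {V α : Type*} [Fintype α]
    {G : SimpleGraph V} (C : G.Coloring α) (f : α → V)
    (hf : Pairwise fun i j => G.Adj (f i) (f j)) :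
    G.chromaticNumber = Fintype.card α :=
  le_antisymm C.colorable.chromaticNumber_le
    (le_chromaticNumber_of_pairwise_adj (by simp) f hf)

namespace SymmetricGroupThree

def transposition : Perm (Fin 3) := swap 0 1

def threeCycle : Perm (Fin 3) := finRotate 3

lemma eq_one_of_forall_commute {h : Perm (Fin 3)} (hh : ∀ g, g * h = h * g) : h = 1 := by
  revert h; decide

lemma eq_transposition_of_commute {h : Perm (Fin 3)} (hh : h ≠ 1)
    (hc : h * transposition = transposition * h) : h = transposition := by
  revert h; decide

lemma eq_threeCycle_or_eq_inv_of_commute {h k : Perm (Fin 3)} (hh : h ≠ 1) (hk : k ≠ 1)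
    (hne : h ≠ k) (hc : h * k = k * h) :
    h = threeCycle ∧ k = threeCycle⁻¹ ∨ h = threeCycle⁻¹ ∧ k = threeCycle := by
  revert h k; decide

lemma transposition_mul_threeCycle_ne :
    transposition * threeCycle ≠ threeCycle * transposition := by
  decide

lemma transposition_ne_threeCycle : transposition ≠ threeCycle := by decide

lemma threeCycle_inv_ne : threeCycle⁻¹ ≠ threeCycle := by decide

def transpositionHom : ℤˣ →* Perm (Fin 3) :=
  MonoidHom.mk' (fun ε => if ε = 1 then 1 else transposition) (by decide)

lemma transpositionHom_mem_center_iff {ε : ℤˣ} :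
    transpositionHom ε ∈ Set.center (Perm (Fin 3)) ↔ ε = 1 := by
  rw [Semigroup.mem_center_iff]; revert ε; decide

@[simp] lemma transpositionHom_neg_one : transpositionHom (-1) = transposition := rfl

end SymmetricGroupThree

open ChainOfGroups SymmetricGroupThree

abbrev Sym3Chain (C : Type*) [CommGroup C] : Type _ :=
  ChainOfGroups (transpositionHom.comp (MonoidHom.fst ℤˣ C))

namespace Sym3Chain

variable {C : Type*} [CommGroup C]

lemma top_mem_center_iff {ε : ℤˣ} {c : C} :
    (top (ε, c) : Sym3Chain C) ∈ Set.center (Sym3Chain C) ↔ ε = 1 := by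
  simp [ChainOfGroups.top_mem_center_iff, transpositionHom_mem_center_iff]

lemma bot_mem_center_iff {h : Perm (Fin 3)} :
    (bot h : Sym3Chain C) ∈ Set.center (Sym3Chain C) ↔ h = 1 := by
  rw [ChainOfGroups.bot_mem_center_iff, Semigroup.mem_center_iff]
  exact ⟨eq_one_of_forall_commute, by rintro rfl; simp⟩

lemma neg_one_of_top_notMem_center {ε : ℤˣ} {c : C}
    (h : (top (ε, c) : Sym3Chain C) ∉ Set.center (Sym3Chain C)) : ε = -1 :=
  (Int.units_eq_one_or ε).resolve_left (by simpa [top_mem_center_iff] using h)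

def coloring : (commGraph (Sym3Chain C)).Coloring (Option C) :=
  .mk (fun v => match v.1 with
    | top (_, c) => some c
    | bot h => if h = threeCycle then some 1 else none) <| by
    rintro ⟨⟨ε, c⟩ | h, hx⟩ ⟨⟨δ, d⟩ | k, hy⟩ ⟨hne, hcomm⟩
    · obtain rfl := neg_one_of_top_notMem_center hx
      obtain rfl := neg_one_of_top_notMem_center hy
      simpa using hne
    · obtain rfl := neg_one_of_top_notMem_center hx
      have hk : k ≠ 1 := by simpa [bot_mem_center_iff] using hy
      obtain rfl := eq_transposition_of_commute hk (by simpa using (bot.inj hcomm).symm)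
      simp [transposition_ne_threeCycle]
    · obtain rfl := neg_one_of_top_notMem_center hy
      have hh : h ≠ 1 := by simpa [bot_mem_center_iff] using hx
      obtain rfl := eq_transposition_of_commute hh (by simpa using bot.inj hcomm)
      simp [transposition_ne_threeCycle]
    · have hh : h ≠ 1 := by simpa [bot_mem_center_iff] using hx
      have hk : k ≠ 1 := by simpa [bot_mem_center_iff] using hy
      have hhk : h ≠ k := by simpa using hne
      rcases eq_threeCycle_or_eq_inv_of_commute hh hk hhk (bot.inj hcomm) with
        ⟨rfl, rfl⟩ | ⟨rfl, rfl⟩ <;> simp [threeCycle_inv_ne]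

def clique : Option C → {x : Sym3Chain C // x ∉ Set.center (Sym3Chain C)}
  | none => ⟨bot transposition, by simp [bot_mem_center_iff, transposition]⟩
  | some c => ⟨top (-1, c), by simp [top_mem_center_iff]⟩

lemma pairwise_adj_clique :
    Pairwise fun i j => (commGraph (Sym3Chain C)).Adj (clique i) (clique j) := by
  rintro (_ | c) (_ | d) hne
  · exact absurd rfl hne
  all_goals refine ⟨?_, ?_⟩ <;> simp_all [clique, Subtype.ext_iff, mul_comm]

theorem chromaticNumber_commGraph [Fintype C] :
    (commGraph (Sym3Chain C)).chromaticNumber = Fintype.card C + 1 := by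
  rw [SimpleGraph.chromaticNumber_eq_card_of_pairwise_adj coloring clique pairwise_adj_clique,
    Fintype.card_option, Nat.cast_succ]

end Sym3Chain

theorem exists_clifford_semigroup_chromaticNumber_eq (n : ℕ) (hn : 2 ≤ n) :
    ∃ (S : Type) (_ : Semigroup S) (_ : Fintype S) (_ : Inv S),
      -- `S` is a Clifford semigroup
      (∀ x : S, x⁻¹⁻¹ = x) ∧
      (∀ x : S, x * x⁻¹ * x = x) ∧
      (∀ x : S, x⁻¹ * x = x * x⁻¹) ∧
      (∀ e : S, e * e = e → ∀ y : S, e * y = y * e) ∧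
      -- `S` is non-commutative
      (∃ a b : S, a * b ≠ b * a) ∧
      -- and the chromatic number of its commuting graph is `n`
      (commGraph S).chromaticNumber = (n : ℕ∞) := by
  obtain ⟨k, rfl⟩ : ∃ k, n = k + 1 := ⟨n - 1, by omega⟩
  have : NeZero k := ⟨by omega⟩
  refine ⟨Sym3Chain (Multiplicative (ZMod k)), inferInstance, inferInstance, inferInstance,
    inv_inv, mul_inv_mul_self, inv_mul_comm,
    fun e he y => (Semigroup.mem_center_iff.mp (mem_center_of_mul_self he) y).symm,
    ⟨bot transposition, bot threeCycle, by simpa using transposition_mul_threeCycle_ne⟩, ?_⟩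
  rw [Sym3Chain.chromaticNumber_commGraph, Fintype.card_multiplicative, ZMod.card, Nat.cast_succ]
end
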